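/- arXiv:2012.05624 — 5 statements merged into one kernel-verified Lean document; each statement's English description precedes it below -/
import Mathlib

section
/- Let Δ be a consistently oriented connectivity complex and Q_ref ∈ M⁺_Δ. Then the manifold of planar triangular meshes M_Δ(Q_ref) is (a) a path component of M⁺_Δ, and in particular path-connected, and (b) an open subset of ℝ^{2×N_V}. -/
open scoped RealInnerProductSpace
open scoped Classical

noncomputable section

/-- Points in the plane `ℝ²`. -/
abbrev Pt : Type := EuclideanSpace ℝ (Fin 2)

/-- The determinant of the 2×2 matrix with columns `v` and `w`. -/
def det2 (v w : Pt) : ℝ := v 0 * w 1 - v 1 * w 0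

/-- A connectivity complex on the vertex set `Fin N`: a pure, 2-path connected
abstract simplicial 2-complex. -/
structure ConnectivityComplex (N : ℕ) where
  faces : Finset (Finset (Fin N))
  faces_nonempty : faces.Nonempty
  mem_nonempty : ∀ σ ∈ faces, σ.Nonempty
  card_le_three : ∀ σ ∈ faces, σ.card ≤ 3
  down_closed : ∀ σ ∈ faces, ∀ τ : Finset (Fin N), τ ⊆ σ → τ.Nonempty → τ ∈ faces
  pure : ∀ σ ∈ faces, ∃ τ ∈ faces, τ.card = 3 ∧ σ ⊆ τ
  two_path_connected : ∀ σ ∈ faces, ∀ τ ∈ faces, σ.card = 3 → τ.card = 3 → σ ≠ τ →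
    ∃ (m : ℕ) (c : Fin (m + 1) → Finset (Fin N)),
      c 0 = σ ∧ c (Fin.last m) = τ ∧
      (∀ i, c i ∈ faces ∧ (c i).card = 3) ∧
      (∀ i : Fin m, (c i.castSucc ∩ c i.succ).card = 2)

namespace PlanarMesh

variable {N : ℕ}

/-- The geometric realization `Σ_Δ(Q)`: the collection of the convex hulls of the
vertex positions of all faces of `Δ`. -/
def SigmaSet (Δ : ConnectivityComplex N) (Q : Fin N → Pt) : Set (Set Pt) :=
  { s | ∃ σ ∈ Δ.faces, s = convexHull ℝ (Q '' (σ : Set (Fin N))) }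

/-- `Q` is an admissible assignment of vertex positions for `Δ`: `Σ_Δ(Q)` is a geometric
simplicial complex in `ℝ²` whose associated abstract simplicial complex is exactly `Δ`. -/
def IsAdmissible (Δ : ConnectivityComplex N) (Q : Fin N → Pt) : Prop :=
  -- each member of `Σ_Δ(Q)` is a simplex, i.e. the convex hull of affinely independent points
  (∀ σ ∈ Δ.faces, AffineIndependent ℝ fun i : σ => Q i.1) ∧
  -- every face of a member of `Σ_Δ(Q)` belongs to `Σ_Δ(Q)`
  (∀ σ ∈ Δ.faces, ∀ ρ : Finset (Fin N), ρ ⊆ σ → ρ.Nonempty →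
      convexHull ℝ (Q '' (ρ : Set (Fin N))) ∈ SigmaSet Δ Q) ∧
  -- the nonempty intersection of any two members is a common face of both
  (∀ σ ∈ Δ.faces, ∀ τ ∈ Δ.faces,
      (convexHull ℝ (Q '' (σ : Set (Fin N))) ∩ convexHull ℝ (Q '' (τ : Set (Fin N)))).Nonempty →
      ∃ ρ : Finset (Fin N), ρ.Nonempty ∧ ρ ⊆ σ ∧ ρ ⊆ τ ∧
        convexHull ℝ (Q '' (σ : Set (Fin N))) ∩ convexHull ℝ (Q '' (τ : Set (Fin N)))
          = convexHull ℝ (Q '' (ρ : Set (Fin N)))) ∧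
  -- the abstract simplicial complex associated with `Σ_Δ(Q)` is exactly `Δ`
  (∀ σ : Finset (Fin N), σ.Nonempty →
      convexHull ℝ (Q '' (σ : Set (Fin N))) ∈ SigmaSet Δ Q → σ ∈ Δ.faces)

/-- The set `M⁰_Δ` of admissible meshes with connectivity `Δ`. -/
def M0 (Δ : ConnectivityComplex N) : Set (Fin N → Pt) := { Q | IsAdmissible Δ Q }

/-- The (oriented) edges induced by an oriented triangle `[o 0, o 1, o 2]`. -/
def inducedEdges (o : Fin 3 → Fin N) : Finset (Fin N × Fin N) :=
  {(o 1, o 2), (o 2, o 0), (o 0, o 1)}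

/-- A consistently oriented connectivity complex: each 2-face carries an orientation,
and two 2-faces sharing a 1-face induce opposite orientations on that 1-face. -/
structure OrientedComplex (N : ℕ) extends ConnectivityComplex N where
  orient : Finset (Fin N) → (Fin 3 → Fin N)
  orient_spec : ∀ σ ∈ faces, σ.card = 3 → Finset.image (orient σ) Finset.univ = σ
  consistent : ∀ σ ∈ faces, ∀ τ ∈ faces, σ.card = 3 → τ.card = 3 → σ ≠ τ →
    (σ ∩ τ).card = 2 → ∀ a b : Fin N, a ∈ σ ∩ τ → b ∈ σ ∩ τ → a ≠ b →
      ((a, b) ∈ inducedEdges (orient σ) ↔ (b, a) ∈ inducedEdges (orient τ))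

variable (Δ : OrientedComplex N)

/-- The signed area `A_Q[i₀,i₁,i₂]` of an oriented triangle. -/
def signedArea (Q : Fin N → Pt) (o : Fin 3 → Fin N) : ℝ :=
  det2 (Q (o 1) - Q (o 0)) (Q (o 2) - Q (o 1)) / 2

/-- The set `M⁺_Δ` of admissible oriented meshes. -/
def Mplus : Set (Fin N → Pt) :=
  { Q | Q ∈ M0 Δ.toConnectivityComplex ∧
      ∀ σ ∈ Δ.faces, σ.card = 3 → 0 < signedArea Q (Δ.orient σ) }

/-- The manifold of planar triangular meshes `M_Δ(Q_ref)`: all `Q ∈ M⁺_Δ` which can be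
joined to `Q_ref` by a continuous path inside `M⁺_Δ`. -/
def Mmesh (Qref : Fin N → Pt) : Set (Fin N → Pt) :=
  { Q | JoinedIn (Mplus Δ) Qref Q }

/-- The length of the `ℓ`-th edge (the one opposite the `ℓ`-th vertex). -/
def edgeLen (Q : Fin N → Pt) (o : Fin 3 → Fin N) (ℓ : Fin 3) : ℝ :=
  ‖Q (o (ℓ + 1)) - Q (o (ℓ + 2))‖

/-- The `ℓ`-th height (the one through the `ℓ`-th vertex). -/
def height (Q : Fin N → Pt) (o : Fin 3 → Fin N) (ℓ : Fin 3) : ℝ :=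
  2 * signedArea Q o / edgeLen Q o ℓ

/-- The 2-faces of `Δ`. -/
def twoFaces : Finset (Finset (Fin N)) := Δ.faces.filter fun σ => σ.card = 3

/-- The boundary 1-faces `E_∂`: those contained in exactly one 2-face. -/
def boundaryEdges : Finset (Finset (Fin N)) :=
  Δ.faces.filter fun e =>
    e.card = 2 ∧ (Δ.faces.filter fun σ => σ.card = 3 ∧ e ⊆ σ).card = 1

/-- An interior 1-face: one contained in exactly two 2-faces. -/
def IsInteriorEdge (e : Finset (Fin N)) : Prop :=
  e ∈ Δ.faces ∧ e.card = 2 ∧ (Δ.faces.filter fun σ => σ.card = 3 ∧ e ⊆ σ).card = 2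

/-- The boundary vertices `V_∂`: those contained in some boundary 1-face. -/
def boundaryVertices : Finset (Fin N) :=
  Finset.univ.filter fun i => ∃ e ∈ boundaryEdges Δ, i ∈ e

/-- The 1-norm of `w` in a rotated coordinate system whose first axis is the unit vector `u`. -/
def rot1norm (u w : Pt) : ℝ := |w 0 * u 0 + w 1 * u 1| + |w 1 * u 0 - w 0 * u 1|

/-- The unit direction from `a` to `b`. -/
def unitDir (a b : Pt) : Pt := ‖b - a‖⁻¹ • (b - a)

/-- The distance `D_Q(i, [j₀, j₁])` of vertex `i` from the edge `[j₀, j₁]`, measured in the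
1-norm of a rotated coordinate system with one axis parallel to `Q j₁ - Q j₀`. -/
def Dpair (Q : Fin N → Pt) (i j0 j1 : Fin N) : ℝ :=
  sInf ((fun x => rot1norm (unitDir (Q j0) (Q j1)) (Q i - x)) '' segment ℝ (Q j0) (Q j1))

/-- The distance `D_Q(i, e)` for an (unordered) 1-face `e`. -/
def Dedge (Q : Fin N → Pt) (i : Fin N) (e : Finset (Fin N)) : ℝ :=
  sInf { r | ∃ j0 ∈ e, ∃ j1 ∈ e, j0 ≠ j1 ∧ r = Dpair Q i j0 j1 }

/-- The squared Frobenius norm of `Q - R`. -/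
def frobSq (Q R : Fin N → Pt) : ℝ := ∑ i, ‖Q i - R i‖ ^ 2

/-- The Frobenius norm of `Q`. -/
def frobNorm (Q : Fin N → Pt) : ℝ := Real.sqrt (∑ i, ‖Q i‖ ^ 2)

/-- The augmentation function `f`. -/
def ffun (Qref : Fin N → Pt) (β1 β2 β3 : ℝ) (Q : Fin N → Pt) : ℝ :=
  (∑ σ ∈ twoFaces Δ, ∑ ℓ : Fin 3, β1 / height Q (Δ.orient σ) ℓ)
  + (∑ e ∈ boundaryEdges Δ,
      ∑ i ∈ (boundaryVertices Δ).filter (fun i => i ∉ e), β2 / Dedge Q i e)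
  + β3 / 2 * frobSq Q Qref

/-- The semiperimeter of a triangle. -/
def semiPerimeter (Q : Fin N → Pt) (o : Fin 3 → Fin N) : ℝ :=
  (edgeLen Q o 0 + edgeLen Q o 1 + edgeLen Q o 2) / 2

/-- The inradius of a triangle: area divided by semiperimeter. -/
def inradius (Q : Fin N → Pt) (o : Fin 3 → Fin N) : ℝ :=
  signedArea Q o / semiPerimeter Q o

/-- The circumradius of a triangle. -/
def circumradius (Q : Fin N → Pt) (o : Fin 3 → Fin N) : ℝ :=
  edgeLen Q o 0 * edgeLen Q o 1 * edgeLen Q o 2 / (4 * signedArea Q o)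

/-- The interior angle of the triangle at the vertex `o ℓ`. -/
def interiorAngle (Q : Fin N → Pt) (o : Fin 3 → Fin N) (ℓ : Fin 3) : ℝ :=
  InnerProductGeometry.angle (Q (o (ℓ + 1)) - Q (o ℓ)) (Q (o (ℓ + 2)) - Q (o ℓ))


section AuxLemmas

lemma det2_self (v : Pt) : det2 v v = 0 := by simp [det2]; ring

lemma det2_neg_swap (a b c : Pt) : det2 (b - a) (c - a) = - det2 (a - b) (c - b) := by
  simp [det2, PiLp.sub_apply]; ring

lemma det2_combo (u base : Pt) (w1 w2 w3 : ℝ) (A B C : Pt) (h : w1 + w2 + w3 = 1) :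
    det2 u (w1 • A + w2 • B + w3 • C - base)
      = w1 * det2 u (A - base) + w2 * det2 u (B - base) + w3 * det2 u (C - base) := by
  simp only [det2, PiLp.sub_apply, PiLp.add_apply, PiLp.smul_apply, smul_eq_mul]
  linear_combination (u 0 * base 1 - u 1 * base 0) * h

lemma det2_pair (u : Pt) (x : ℝ) (A B : Pt) :
    det2 (x • A + (1-x) • B) u = x * det2 A u + (1-x) * det2 B u := by
  simp only [det2, PiLp.add_apply, PiLp.smul_apply, smul_eq_mul]
  ring

-- convex hull of image basics
lemma hull_mono {Q : Fin N → Pt} {σ τ : Finset (Fin N)} (h : σ ⊆ τ) :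
    convexHull ℝ (Q '' ↑σ) ⊆ convexHull ℝ (Q '' ↑τ) :=
  convexHull_mono (Set.image_mono (by exact_mod_cast h))

lemma mem_hull_self {Q : Fin N → Pt} {σ : Finset (Fin N)} {i : Fin N} (h : i ∈ σ) :
    Q i ∈ convexHull ℝ (Q '' ↑σ) :=
  subset_convexHull ℝ _ (Set.mem_image_of_mem Q (by exact_mod_cast h))

/-- approximation lemma -/
lemma hull_approx {σ : Finset (Fin N)} {Q1 Q2 : Fin N → Pt} {η : ℝ}
    (h : ∀ j ∈ σ, dist (Q1 j) (Q2 j) ≤ η) :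
    ∀ z ∈ convexHull ℝ (Q1 '' ↑σ), ∃ z' ∈ convexHull ℝ (Q2 '' ↑σ), dist z z' ≤ η := by
  intro z hz
  have : convexHull ℝ (Q1 '' ↑σ) ⊆ {z | ∃ z' ∈ convexHull ℝ (Q2 '' ↑σ), dist z z' ≤ η} := by
    apply convexHull_min
    · rintro _ ⟨j, hj, rfl⟩
      exact ⟨Q2 j, subset_convexHull ℝ _ (Set.mem_image_of_mem Q2 hj), h j (by exact_mod_cast hj)⟩
    · rintro z1 ⟨z1', h1', d1⟩ z2 ⟨z2', h2', d2⟩ s t hs ht hst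
      refine ⟨s • z1' + t • z2', (convex_convexHull ℝ _) h1' h2' hs ht hst, ?_⟩
      have : s • z1 + t • z2 - (s • z1' + t • z2') = s • (z1 - z1') + t • (z2 - z2') := by module
      rw [dist_eq_norm, this]
      calc ‖s • (z1 - z1') + t • (z2 - z2')‖ ≤ s * ‖z1 - z1'‖ + t * ‖z2 - z2'‖ := by
            refine (norm_add_le _ _).trans ?_
            rw [norm_smul, norm_smul, Real.norm_eq_abs, Real.norm_eq_abs, abs_of_nonneg hs,
              abs_of_nonneg ht]
        _ ≤ s * η + t * η := by
            rw [dist_eq_norm] at d1 d2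
            gcongr
        _ = η := by rw [← add_mul, hst, one_mul]
  exact this hz

lemma combo_mem_hull {Q : Fin N → Pt} {σ : Finset (Fin N)} {w : Fin N → ℝ}
    (h0 : ∀ i ∈ σ, 0 ≤ w i) (h1 : ∑ i ∈ σ, w i = 1) :
    ∑ i ∈ σ, w i • Q i ∈ convexHull ℝ (Q '' ↑σ) := by
  have := Finset.centerMass_mem_convexHull σ h0 (by rw [h1]; norm_num)
    (fun i hi => Set.mem_image_of_mem Q (by exact_mod_cast hi))
  rwa [Finset.centerMass_eq_of_sum_1 _ _ h1] at this

lemma injOn_of_AI {Q : Fin N → Pt} {σ : Finset (Fin N)}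
    (h : AffineIndependent ℝ (fun i : ↑σ => Q i.1)) : Set.InjOn Q ↑σ := by
  intro a ha b hb hab
  exact congrArg Subtype.val (h.injective (show (fun i : ↑σ => Q i.1) ⟨a, by exact_mod_cast ha⟩
    = (fun i : ↑σ => Q i.1) ⟨b, by exact_mod_cast hb⟩ from hab))

lemma mem_hull_iff_weights {Q : Fin N → Pt} {σ : Finset (Fin N)} {z : Pt}
    (hinj : Set.InjOn Q ↑σ) :
    z ∈ convexHull ℝ (Q '' ↑σ) ↔
      ∃ w : Fin N → ℝ, (∀ i ∈ σ, 0 ≤ w i) ∧ ∑ i ∈ σ, w i = 1 ∧ ∑ i ∈ σ, w i • Q i = z := by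
  constructor
  · intro hz
    rw [← Finset.coe_image, Finset.mem_convexHull'] at hz
    obtain ⟨wp, hw0, hw1, hwz⟩ := hz
    have hinj' : ∀ x ∈ σ, ∀ y ∈ σ, Q x = Q y → x = y := fun x hx y hy h =>
      hinj (by exact_mod_cast hx) (by exact_mod_cast hy) h
    rw [Finset.sum_image hinj'] at hw1
    rw [Finset.sum_image hinj'] at hwz
    exact ⟨fun i => wp (Q i), fun i hi => hw0 _ (Finset.mem_image_of_mem Q hi), hw1, hwz⟩
  · rintro ⟨w, h0, h1, rfl⟩
    exact combo_mem_hull h0 h1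

lemma AI_coe_image {Q : Fin N → Pt} {σ : Finset (Fin N)}
    (h : AffineIndependent ℝ (fun i : ↑σ => Q i.1)) :
    AffineIndependent ℝ (Subtype.val : ↑(↑(σ.image Q) : Set Pt) → Pt) := by
  have h2 := h.range
  apply h2.mono
  rw [Finset.coe_image, Set.image_eq_range]
  exact subset_rfl

lemma sub_simplex_inter {Q : Fin N → Pt} {U α β : Finset (Fin N)}
    (hAI : AffineIndependent ℝ (fun i : ↑U => Q i.1)) (hα : α ⊆ U) (hβ : β ⊆ U) :
    convexHull ℝ (Q '' ↑α) ∩ convexHull ℝ (Q '' ↑β) = convexHull ℝ (Q '' ↑(α ∩ β)) := by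
  have hinj : Set.InjOn Q ↑U := injOn_of_AI hAI
  have h1 := AffineIndependent.convexHull_inter (AI_coe_image hAI)
    (Finset.image_subset_image hα) (Finset.image_subset_image hβ)
  rw [← Finset.coe_inter, ← Finset.image_inter_of_injOn _ _
    (hinj.mono (Set.union_subset (Finset.coe_subset.mpr hα) (Finset.coe_subset.mpr hβ)))] at h1
  simp only [Finset.coe_image] at h1
  exact h1.symm

lemma H4 {Q : Fin N → Pt} {σ : Finset (Fin N)}
    (h : AffineIndependent ℝ (fun i : ↑σ => Q i.1)) {w : Fin N → ℝ}
    (h0 : ∑ i ∈ σ, w i = 0) (h1 : ∑ i ∈ σ, w i • Q i = 0) : ∀ i ∈ σ, w i = 0 := by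
  intro i hi
  have := affineIndependent_iff.mp h σ.attach (fun t => w t.1)
    (by rw [← Finset.sum_attach σ w] at h0; exact h0)
    (by rw [← Finset.sum_attach σ (fun i => w i • Q i)] at h1; exact h1)
    ⟨i, hi⟩ (Finset.mem_attach _ _)
  exact this



lemma AI_single {Q : Fin N → Pt} (a : Fin N) :
    AffineIndependent ℝ (fun i : ↑({a} : Finset (Fin N)) => Q i.1) := by
  have : Subsingleton (↑({a} : Finset (Fin N))) :=
    ⟨fun x y => Subtype.ext (by
      have hx := x.2; have hy := y.2
      simp only [Finset.mem_singleton] at hx hy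
      rw [hx, hy])⟩
  exact affineIndependent_of_subsingleton ℝ _

lemma AI_pair {Q : Fin N → Pt} {a b : Fin N} (hab : a ≠ b) (h : Q a ≠ Q b) :
    AffineIndependent ℝ (fun i : ↑({a, b} : Finset (Fin N)) => Q i.1) := by
  have hAI := affineIndependent_of_ne ℝ h
  have hf : Function.Injective (fun t : ↑({a, b} : Finset (Fin N)) =>
      (if (t : Fin N) = a then 0 else 1 : Fin 2)) := by
    rintro ⟨x, hx⟩ ⟨y, hy⟩ hxy
    simp only [Finset.mem_insert, Finset.mem_singleton] at hx hy
    apply Subtype.ext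
    rcases hx with rfl | rfl <;> rcases hy with rfl | rfl <;> simp_all [eq_comm]
  have h2 := hAI.comp_embedding ⟨_, hf⟩
  simp only [Function.Embedding.coeFn_mk] at h2
  have heq : (![Q a, Q b] ∘ fun t : ↑({a, b} : Finset (Fin N)) =>
      (if (t : Fin N) = a then 0 else 1 : Fin 2)) = fun i : ↑({a, b} : Finset (Fin N)) => Q i.1 := by
    funext t
    rcases Finset.mem_insert.mp t.2 with h' | h'
    · simp [Function.comp, h']
    · have hb : (t : Fin N) = b := Finset.mem_singleton.mp h'
      simp [Function.comp, hb, Ne.symm hab]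
  rwa [heq] at h2

lemma AI_triple {Q : Fin N → Pt} {a b c : Fin N} (hab : a ≠ b) (hac : a ≠ c) (hbc : b ≠ c)
    (hdet : det2 (Q b - Q a) (Q c - Q a) ≠ 0) :
    AffineIndependent ℝ (fun i : ↑({a, b, c} : Finset (Fin N)) => Q i.1) := by
  have hAI : AffineIndependent ℝ ![Q a, Q b, Q c] := by
    rw [affineIndependent_iff_not_collinear]
    intro hcol
    obtain ⟨v, hv⟩ := (collinear_iff_of_mem
      (show Q a ∈ Set.range ![Q a, Q b, Q c] from ⟨0, rfl⟩)).mp hcol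
    obtain ⟨t1, ht1⟩ := hv (Q b) ⟨1, rfl⟩
    obtain ⟨t2, ht2⟩ := hv (Q c) ⟨2, rfl⟩
    apply hdet
    have hb : Q b - Q a = t1 • v := by rw [ht1, vadd_eq_add]; abel
    have hc : Q c - Q a = t2 • v := by rw [ht2, vadd_eq_add]; abel
    rw [hb, hc]
    simp only [det2, PiLp.smul_apply, smul_eq_mul]
    ring
  have hf : Function.Injective (fun t : ↑({a, b, c} : Finset (Fin N)) =>
      (if (t : Fin N) = a then 0 else if (t : Fin N) = b then 1 else 2 : Fin 3)) := by
    rintro ⟨x, hx⟩ ⟨y, hy⟩ hxy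
    simp only [Finset.mem_insert, Finset.mem_singleton] at hx hy
    apply Subtype.ext
    rcases hx with rfl | rfl | rfl <;> rcases hy with rfl | rfl | rfl <;> simp_all [eq_comm]
  have h2 := hAI.comp_embedding ⟨_, hf⟩
  simp only [Function.Embedding.coeFn_mk] at h2
  have heq : (![Q a, Q b, Q c] ∘ fun t : ↑({a, b, c} : Finset (Fin N)) =>
      (if (t : Fin N) = a then 0 else if (t : Fin N) = b then 1 else 2 : Fin 3))
      = fun i : ↑({a, b, c} : Finset (Fin N)) => Q i.1 := by
    funext t
    rcases Finset.mem_insert.mp t.2 with h' | h'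
    · simp [Function.comp, h']
    · rcases Finset.mem_insert.mp h' with h'' | h''
      · simp [Function.comp, h'', Ne.symm hab]
      · have hcc : (t : Fin N) = c := Finset.mem_singleton.mp h''
        simp [Function.comp, hcc, Ne.symm hac, Ne.symm hbc]
  rwa [heq] at h2

lemma sum_triple {M : Type*} [AddCommMonoid M] {a b c : Fin N} (g : Fin N → M)
    (hab : a ≠ b) (hac : a ≠ c) (hbc : b ≠ c) :
    ∑ i ∈ ({a, b, c} : Finset (Fin N)), g i = g a + g b + g c := by
  rw [Finset.sum_insert (by simp [hab, hac]), Finset.sum_pair hbc, add_assoc]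

lemma det_orient (Q : Fin N → Pt) (o : Fin 3 → Fin N) (k : Fin 3) :
    det2 (Q (o (k + 1)) - Q (o k)) (Q (o (k + 2)) - Q (o k)) = 2 * signedArea Q o := by
  fin_cases k
  · show det2 (Q (o 1) - Q (o 0)) (Q (o 2) - Q (o 0)) = 2 * signedArea Q o
    simp only [signedArea, det2, PiLp.sub_apply]; ring
  · show det2 (Q (o 2) - Q (o 1)) (Q (o 0) - Q (o 1)) = 2 * signedArea Q o
    simp only [signedArea, det2, PiLp.sub_apply]; ring
  · show det2 (Q (o 0) - Q (o 2)) (Q (o 1) - Q (o 2)) = 2 * signedArea Q o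
    simp only [signedArea, det2, PiLp.sub_apply]; ring

lemma orient_inj {σ : Finset (Fin N)} (hσ : σ ∈ Δ.faces) (h3 : σ.card = 3) :
    Function.Injective (Δ.orient σ) := by
  have hspec := Δ.orient_spec σ hσ h3
  have hcard : (Finset.image (Δ.orient σ) Finset.univ).card = (Finset.univ : Finset (Fin 3)).card := by
    rw [hspec, h3]; rfl
  have hinj : Set.InjOn (Δ.orient σ) ↑(Finset.univ : Finset (Fin 3)) :=
    Finset.injOn_of_card_image_eq hcard
  intro x y hxy
  exact hinj (by simp) (by simp) hxy

lemma orient_triple {σ : Finset (Fin N)} (hσ : σ ∈ Δ.faces) (h3 : σ.card = 3) :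
    σ = {Δ.orient σ 0, Δ.orient σ 1, Δ.orient σ 2} := by
  have hspec := Δ.orient_spec σ hσ h3
  calc σ = Finset.image (Δ.orient σ) Finset.univ := hspec.symm
    _ = {Δ.orient σ 0, Δ.orient σ 1, Δ.orient σ 2} := by
        rw [show (Finset.univ : Finset (Fin 3)) = {0, 1, 2} from rfl]
        rw [Finset.image_insert, Finset.image_insert, Finset.image_singleton]

lemma triple_perm (o : Fin 3 → Fin N) (k : Fin 3) :
    ({o k, o (k + 1), o (k + 2)} : Finset (Fin N)) = {o 0, o 1, o 2} := by
  fin_cases k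
  · show ({o 0, o 1, o 2} : Finset (Fin N)) = {o 0, o 1, o 2}
    rfl
  · show ({o 1, o 2, o 0} : Finset (Fin N)) = {o 0, o 1, o 2}
    ext x; simp only [Finset.mem_insert, Finset.mem_singleton]; tauto
  · show ({o 2, o 0, o 1} : Finset (Fin N)) = {o 0, o 1, o 2}
    ext x; simp only [Finset.mem_insert, Finset.mem_singleton]; tauto

lemma edge_mem_or (o : Fin 3 → Fin N) {a b : Fin N}
    (ha : a ∈ ({o 0, o 1, o 2} : Finset (Fin N))) (hb : b ∈ ({o 0, o 1, o 2} : Finset (Fin N)))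
    (hab : a ≠ b) :
    (a, b) ∈ inducedEdges o ∨ (b, a) ∈ inducedEdges o := by
  simp only [Finset.mem_insert, Finset.mem_singleton] at ha hb
  rcases ha with rfl | rfl | rfl <;> rcases hb with rfl | rfl | rfl <;>
    simp_all [inducedEdges] <;> tauto

lemma edge_index (o : Fin 3 → Fin N) {x y : Fin N} (h : (x, y) ∈ inducedEdges o) :
    ∃ k : Fin 3, x = o k ∧ y = o (k + 1) := by
  simp only [inducedEdges, Finset.mem_insert, Finset.mem_singleton, Prod.ext_iff] at h
  rcases h with ⟨h1, h2⟩ | ⟨h1, h2⟩ | ⟨h1, h2⟩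
  · exact ⟨1, h1, by rw [show ((1 : Fin 3) + 1) = 2 by rfl]; exact h2⟩
  · exact ⟨2, h1, by rw [show ((2 : Fin 3) + 1) = 0 by rfl]; exact h2⟩
  · exact ⟨0, h1, by rw [show ((0 : Fin 3) + 1) = 1 by rfl]; exact h2⟩

lemma third_eq (o : Fin 3 → Fin N) (k : Fin 3) {c : Fin N}
    (hc : c ∈ ({o 0, o 1, o 2} : Finset (Fin N))) (h1 : c ≠ o k) (h2 : c ≠ o (k + 1)) :
    c = o (k + 2) := by
  have key : ∀ m k : Fin 3, m ≠ k → m ≠ k + 1 → m = k + 2 := by decide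
  simp only [Finset.mem_insert, Finset.mem_singleton] at hc
  rcases hc with rfl | rfl | rfl <;>
    exact congrArg o (key _ k (fun h => h1 (congrArg o h)) (fun h => h2 (congrArg o h)))


lemma det2_zero_right (u : Pt) : det2 u 0 = 0 := by simp [det2]

lemma mem_hull_triple {Q : Fin N → Pt} (v p q : Fin N) {w1 w2 w3 : ℝ}
    (h1 : 0 ≤ w1) (h2 : 0 ≤ w2) (h3 : 0 ≤ w3) (hs : w1 + w2 + w3 = 1) :
    w1 • Q v + w2 • Q p + w3 • Q q ∈ convexHull ℝ (Q '' ↑({v, p, q} : Finset (Fin N))) := by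
  have hsum : ∑ i : Fin 3, (![w1, w2, w3]) i = 1 := by
    rw [Fin.sum_univ_three]; simpa using hs
  have hmem := Finset.centerMass_mem_convexHull (Finset.univ : Finset (Fin 3))
    (w := ![w1, w2, w3]) (z := ![Q v, Q p, Q q])
    (by intro i _; fin_cases i <;> simpa)
    (by rw [hsum]; norm_num)
    (by intro i _
        fin_cases i
        · show Q v ∈ Q '' ↑({v, p, q} : Finset (Fin N))
          exact Set.mem_image_of_mem Q (by simp)
        · show Q p ∈ Q '' ↑({v, p, q} : Finset (Fin N))
          exact Set.mem_image_of_mem Q (by simp)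
        · show Q q ∈ Q '' ↑({v, p, q} : Finset (Fin N))
          exact Set.mem_image_of_mem Q (by simp))
  rwa [Finset.centerMass_eq_of_sum_1 _ _ hsum, Fin.sum_univ_three,
    show (![w1, w2, w3]) 0 = w1 from rfl, show (![w1, w2, w3]) 1 = w2 from rfl,
    show (![w1, w2, w3]) 2 = w3 from rfl,
    show (![Q v, Q p, Q q]) 0 = Q v from rfl, show (![Q v, Q p, Q q]) 1 = Q p from rfl,
    show (![Q v, Q p, Q q]) 2 = Q q from rfl] at hmem

lemma edge_core {Q : Fin N → Pt} {S T : Finset (Fin N)} {a b : Fin N}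
    (hS : S ∈ Δ.faces) (hT : T ∈ Δ.faces) (hS3 : S.card = 3) (hT3 : T.card = 3)
    (hab : a ≠ b) (hST : S ∩ T = {a, b})
    (heS : (a, b) ∈ inducedEdges (Δ.orient S)) (heT : (b, a) ∈ inducedEdges (Δ.orient T))
    (hAIS : AffineIndependent ℝ (fun i : ↑S => Q i.1))
    (hAIT : AffineIndependent ℝ (fun i : ↑T => Q i.1))
    (hposS : 0 < signedArea Q (Δ.orient S)) (hposT : 0 < signedArea Q (Δ.orient T)) :
    convexHull ℝ (Q '' ↑S) ∩ convexHull ℝ (Q '' ↑T)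
      = convexHull ℝ (Q '' ↑({a, b} : Finset (Fin N))) := by
  obtain ⟨k, hak, hbk⟩ := edge_index (Δ.orient S) heS
  obtain ⟨k', hbk', hak'⟩ := edge_index (Δ.orient T) heT
  set c := Δ.orient S (k + 2) with hc
  set d := Δ.orient T (k' + 2) with hd
  have hinjS := orient_inj Δ hS hS3
  have hinjT := orient_inj Δ hT hT3
  have hSt : S = {a, b, c} := by
    rw [hak, hbk, hc]
    exact (orient_triple Δ hS hS3).trans (triple_perm (Δ.orient S) k).symm
  have hTt : T = {a, b, d} := by
    have hT' : T = {b, a, d} := by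
      rw [hbk', hak', hd]
      exact (orient_triple Δ hT hT3).trans (triple_perm (Δ.orient T) k').symm
    rw [hT']
    ext x
    simp only [Finset.mem_insert, Finset.mem_singleton]
    tauto
  have hfin3 : ∀ m : Fin 3, m + 2 ≠ m ∧ m + 2 ≠ m + 1 := by decide
  have hca : c ≠ a := by
    rw [hak, hc]; intro h; exact (hfin3 k).1 (hinjS h)
  have hcb : c ≠ b := by
    rw [hbk, hc]; intro h; exact (hfin3 k).2 (hinjS h)
  have hda : d ≠ b := by
    rw [hbk', hd]; intro h; exact (hfin3 k').1 (hinjT h)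
  have hdb : d ≠ a := by
    rw [hak', hd]; intro h; exact (hfin3 k').2 (hinjT h)
  have hdetc : det2 (Q b - Q a) (Q c - Q a) = 2 * signedArea Q (Δ.orient S) := by
    rw [hak, hbk, hc]; exact det_orient Q (Δ.orient S) k
  have hdetd : det2 (Q b - Q a) (Q d - Q a) = -(2 * signedArea Q (Δ.orient T)) := by
    rw [det2_neg_swap]
    rw [show det2 (Q a - Q b) (Q d - Q b) = 2 * signedArea Q (Δ.orient T) by
      rw [hak', hbk', hd]; exact det_orient Q (Δ.orient T) k']
  apply Set.Subset.antisymm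
  · rintro z ⟨hzS, hzT⟩
    obtain ⟨w, hw0, hw1, hwz⟩ := (mem_hull_iff_weights (injOn_of_AI hAIS)).mp hzS
    obtain ⟨u, hu0, hu1, huz⟩ := (mem_hull_iff_weights (injOn_of_AI hAIT)).mp hzT
    rw [hSt] at hw0 hw1 hwz
    rw [hTt] at hu0 hu1 huz
    rw [sum_triple w hab (Ne.symm hca) (Ne.symm hcb)] at hw1
    rw [sum_triple (fun i => w i • Q i) hab (Ne.symm hca) (Ne.symm hcb)] at hwz
    rw [sum_triple u hab (Ne.symm hdb) (Ne.symm hda)] at hu1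
    rw [sum_triple (fun i => u i • Q i) hab (Ne.symm hdb) (Ne.symm hda)] at huz
    have hfz1 : det2 (Q b - Q a) (z - Q a) = w c * (2 * signedArea Q (Δ.orient S)) := by
      rw [← hwz, det2_combo _ _ _ _ _ _ _ _ hw1, sub_self, det2_zero_right, det2_self, hdetc]
      ring
    have hfz2 : det2 (Q b - Q a) (z - Q a) = u d * (-(2 * signedArea Q (Δ.orient T))) := by
      rw [← huz, det2_combo _ _ _ _ _ _ _ _ hu1, sub_self, det2_zero_right, det2_self, hdetd]
      ring
    have hwc : w c = 0 := by
      have h1 := hw0 c (by simp)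
      have h2 := hu0 d (by simp)
      nlinarith [hfz1, hfz2]
    have hz' : z = w a • Q a + w b • Q b := by
      rw [← hwz, hwc]; simp
    have hsum2 : ∑ i ∈ ({a, b} : Finset (Fin N)), w i = 1 := by
      rw [Finset.sum_pair hab]; linarith [hw1]
    have hcmb : ∑ i ∈ ({a, b} : Finset (Fin N)), w i • Q i = z := by
      rw [Finset.sum_pair hab, hz']
    rw [← hcmb]
    exact combo_mem_hull (fun i hi => hw0 i (by revert hi; simp; tauto)) hsum2
  · apply Set.subset_inter
    · exact hull_mono (hST ▸ Finset.inter_subset_left)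
    · exact hull_mono (hST ▸ Finset.inter_subset_right)

lemma edge_inter {Q : Fin N → Pt} {S T : Finset (Fin N)}
    (hS : S ∈ Δ.faces) (hT : T ∈ Δ.faces) (hS3 : S.card = 3) (hT3 : T.card = 3)
    (hne : S ≠ T) (h2 : (S ∩ T).card = 2)
    (hAIS : AffineIndependent ℝ (fun i : ↑S => Q i.1))
    (hAIT : AffineIndependent ℝ (fun i : ↑T => Q i.1))
    (hposS : 0 < signedArea Q (Δ.orient S)) (hposT : 0 < signedArea Q (Δ.orient T)) :
    convexHull ℝ (Q '' ↑S) ∩ convexHull ℝ (Q '' ↑T) = convexHull ℝ (Q '' ↑(S ∩ T)) := by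
  obtain ⟨a, b, hab, hST⟩ := Finset.card_eq_two.mp h2
  have haST : a ∈ S ∩ T := by rw [hST]; simp
  have hbST : b ∈ S ∩ T := by rw [hST]; simp
  have htriS := orient_triple Δ hS hS3
  have haS : a ∈ ({Δ.orient S 0, Δ.orient S 1, Δ.orient S 2} : Finset (Fin N)) :=
    htriS ▸ (Finset.mem_of_mem_inter_left haST)
  have hbS : b ∈ ({Δ.orient S 0, Δ.orient S 1, Δ.orient S 2} : Finset (Fin N)) :=
    htriS ▸ (Finset.mem_of_mem_inter_left hbST)
  rcases edge_mem_or (Δ.orient S) haS hbS hab with h | h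
  · have hT' : (b, a) ∈ inducedEdges (Δ.orient T) :=
      (Δ.consistent S hS T hT hS3 hT3 hne h2 a b haST hbST hab).mp h
    rw [hST]
    exact edge_core Δ hS hT hS3 hT3 hab hST h hT' hAIS hAIT hposS hposT
  · have hT' : (a, b) ∈ inducedEdges (Δ.orient T) :=
      (Δ.consistent S hS T hT hS3 hT3 hne h2 b a hbST haST (Ne.symm hab)).mp h
    have hST' : S ∩ T = {b, a} := by rw [hST]; exact Finset.pair_comm a b
    rw [hST, show ({a, b} : Finset (Fin N)) = {b, a} from Finset.pair_comm a b]
    exact edge_core Δ hS hT hS3 hT3 (Ne.symm hab) hST' h hT' hAIS hAIT hposS hposT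


lemma det2_zero_left (u : Pt) : det2 0 u = 0 := by simp [det2]

lemma det2_pair_right (u : Pt) (x : ℝ) (A B : Pt) :
    det2 u (x • A + (1 - x) • B) = x * det2 u A + (1 - x) * det2 u B := by
  simp only [det2, PiLp.add_apply, PiLp.smul_apply, smul_eq_mul]
  ring

def coneDir (Q : Fin N → Pt) (v p q : Fin N) (x : ℝ) : Pt :=
  x • (Q p - Q v) + (1 - x) • (Q q - Q v)

lemma coneDir_cont (Q : Fin N → Pt) (v p q : Fin N) :
    Continuous (fun x : ℝ => coneDir Q v p q x) := by
  unfold coneDir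
  exact (continuous_id.smul continuous_const).add
    ((continuous_const.sub continuous_id).smul continuous_const)

lemma coneDir_bound (Q : Fin N → Pt) (v p q : Fin N) {x : ℝ} (hx : x ∈ Set.Icc (0:ℝ) 1) :
    ‖coneDir Q v p q x‖ ≤ ‖Q p - Q v‖ + ‖Q q - Q v‖ := by
  obtain ⟨h0, h1⟩ := hx
  calc ‖coneDir Q v p q x‖ ≤ ‖x • (Q p - Q v)‖ + ‖(1 - x) • (Q q - Q v)‖ := norm_add_le _ _
    _ = x * ‖Q p - Q v‖ + (1 - x) * ‖Q q - Q v‖ := by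
        rw [norm_smul, norm_smul, Real.norm_eq_abs, Real.norm_eq_abs,
          abs_of_nonneg h0, abs_of_nonneg (by linarith)]
    _ ≤ _ := by nlinarith [norm_nonneg (Q p - Q v), norm_nonneg (Q q - Q v)]

lemma coneDir_perturb {Q Q' : Fin N → Pt} (v p q : Fin N) {x ε : ℝ}
    (hx : x ∈ Set.Icc (0:ℝ) 1) (hd : ∀ j, dist (Q' j) (Q j) ≤ ε) :
    ‖coneDir Q' v p q x - coneDir Q v p q x‖ ≤ 2 * ε := by
  obtain ⟨h0, h1⟩ := hx
  have hid : coneDir Q' v p q x - coneDir Q v p q x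
      = x • ((Q' p - Q p) - (Q' v - Q v)) + (1 - x) • ((Q' q - Q q) - (Q' v - Q v)) := by
    unfold coneDir; module
  have hb : ∀ j : Fin N, ‖(Q' j - Q j) - (Q' v - Q v)‖ ≤ 2 * ε := by
    intro j
    calc ‖(Q' j - Q j) - (Q' v - Q v)‖ ≤ ‖Q' j - Q j‖ + ‖Q' v - Q v‖ := norm_sub_le _ _
      _ ≤ ε + ε := add_le_add (by rw [← dist_eq_norm]; exact hd j)
          (by rw [← dist_eq_norm]; exact hd v)
      _ = 2 * ε := by ring
  rw [hid]
  calc ‖x • ((Q' p - Q p) - (Q' v - Q v)) + (1 - x) • ((Q' q - Q q) - (Q' v - Q v))‖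
      ≤ ‖x • ((Q' p - Q p) - (Q' v - Q v))‖ + ‖(1 - x) • ((Q' q - Q q) - (Q' v - Q v))‖ :=
        norm_add_le _ _
    _ = x * ‖(Q' p - Q p) - (Q' v - Q v)‖ + (1 - x) * ‖(Q' q - Q q) - (Q' v - Q v)‖ := by
        rw [norm_smul, norm_smul, Real.norm_eq_abs, Real.norm_eq_abs, abs_of_nonneg h0,
          abs_of_nonneg (by linarith)]
    _ ≤ x * (2 * ε) + (1 - x) * (2 * ε) :=
        add_le_add (mul_le_mul_of_nonneg_left (hb p) h0)
          (mul_le_mul_of_nonneg_left (hb q) (by linarith))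
    _ = 2 * ε := by ring

lemma smul_coneDir {Q : Fin N → Pt} (v p q : Fin N) {w1 w2 : ℝ} (h : w1 + w2 ≠ 0) :
    (w1 + w2) • coneDir Q v p q (w1 / (w1 + w2)) = w1 • (Q p - Q v) + w2 • (Q q - Q v) := by
  unfold coneDir
  rw [smul_add, smul_smul, smul_smul]
  congr 1
  · congr 1; field_simp
  · congr 1; field_simp; ring

set_option maxHeartbeats 2000000 in
lemma cone_ev {Q : Fin N → Pt} {S T : Finset (Fin N)} {v : Fin N}
    (hS : S ∈ Δ.faces) (hT : T ∈ Δ.faces) (hS3 : S.card = 3) (hT3 : T.card = 3)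
    (hST : S ∩ T = {v}) (hQ : Q ∈ Mplus Δ) :
    ∀ᶠ Q' in nhds Q,
      AffineIndependent ℝ (fun i : ↑S => Q' i.1) →
      AffineIndependent ℝ (fun i : ↑T => Q' i.1) →
      convexHull ℝ (Q' '' ↑S) ∩ convexHull ℝ (Q' '' ↑T) ⊆ {Q' v} := by
  have hfin3 : ∀ m : Fin 3, m ≠ m + 1 ∧ m ≠ m + 2 ∧ m + 1 ≠ m + 2 := by decide
  have hinjS := orient_inj Δ hS hS3
  have hinjT := orient_inj Δ hT hT3
  have htriS := orient_triple Δ hS hS3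
  have htriT := orient_triple Δ hT hT3
  have hvS : v ∈ S := Finset.mem_of_mem_inter_left (hST ▸ Finset.mem_singleton_self v)
  have hvT : v ∈ T := Finset.mem_of_mem_inter_right (hST ▸ Finset.mem_singleton_self v)
  obtain ⟨k, hk⟩ : ∃ k : Fin 3, v = Δ.orient S k := by
    have := htriS ▸ hvS
    simp only [Finset.mem_insert, Finset.mem_singleton] at this
    rcases this with h | h | h
    exacts [⟨0, h⟩, ⟨1, h⟩, ⟨2, h⟩]
  obtain ⟨k', hk'⟩ : ∃ k' : Fin 3, v = Δ.orient T k' := by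
    have := htriT ▸ hvT
    simp only [Finset.mem_insert, Finset.mem_singleton] at this
    rcases this with h | h | h
    exacts [⟨0, h⟩, ⟨1, h⟩, ⟨2, h⟩]
  set p := Δ.orient S (k + 1) with hp
  set q := Δ.orient S (k + 2) with hq
  set r := Δ.orient T (k' + 1) with hr
  set s2 := Δ.orient T (k' + 2) with hs2
  have hSt : S = {v, p, q} := by
    rw [hk, hp, hq]
    exact htriS.trans (triple_perm (Δ.orient S) k).symm
  have hTt : T = {v, r, s2} := by
    rw [hk', hr, hs2]
    exact htriT.trans (triple_perm (Δ.orient T) k').symm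
  have hvp : v ≠ p := by rw [hk, hp]; intro h; exact (hfin3 k).1 (hinjS h)
  have hvq : v ≠ q := by rw [hk, hq]; intro h; exact (hfin3 k).2.1 (hinjS h)
  have hpq : p ≠ q := by rw [hp, hq]; intro h; exact (hfin3 k).2.2 (hinjS h)
  have hvr : v ≠ r := by rw [hk', hr]; intro h; exact (hfin3 k').1 (hinjT h)
  have hvs : v ≠ s2 := by rw [hk', hs2]; intro h; exact (hfin3 k').2.1 (hinjT h)
  have hrs : r ≠ s2 := by rw [hr, hs2]; intro h; exact (hfin3 k').2.2 (hinjT h)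
  have hdetS : det2 (Q p - Q v) (Q q - Q v) = 2 * signedArea Q (Δ.orient S) := by
    rw [hk, hp, hq]; exact det_orient Q (Δ.orient S) k
  have hdetT : det2 (Q r - Q v) (Q s2 - Q v) = 2 * signedArea Q (Δ.orient T) := by
    rw [hk', hr, hs2]; exact det_orient Q (Δ.orient T) k'
  have hposS := hQ.2 S hS hS3
  have hposT := hQ.2 T hT hT3
  have hDS : 0 < det2 (Q p - Q v) (Q q - Q v) := by rw [hdetS]; linarith
  have hDT : 0 < det2 (Q r - Q v) (Q s2 - Q v) := by rw [hdetT]; linarith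
  -- at Q the two triangles intersect exactly in Q v
  have hiQ : convexHull ℝ (Q '' ↑S) ∩ convexHull ℝ (Q '' ↑T) = {Q v} := by
    have hne : (convexHull ℝ (Q '' ↑S) ∩ convexHull ℝ (Q '' ↑T)).Nonempty :=
      ⟨Q v, mem_hull_self hvS, mem_hull_self hvT⟩
    obtain ⟨ρ, hρne, hρS, hρT, hρeq⟩ := hQ.1.2.2.1 S hS T hT hne
    have hρv : ρ = {v} := by
      have hsub : ρ ⊆ {v} := hST ▸ Finset.subset_inter hρS hρT
      rcases Finset.subset_singleton_iff.mp hsub with h | h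
      · exact absurd h (Finset.nonempty_iff_ne_empty.mp hρne)
      · exact h
    rw [hρeq, hρv]
    simp
  -- nonvanishing of the cone directions
  have hAne : ∀ x ∈ Set.Icc (0:ℝ) 1, coneDir Q v p q x ≠ 0 := by
    intro x hx h0
    have h1 : det2 (coneDir Q v p q x) (Q q - Q v)
        = x * det2 (Q p - Q v) (Q q - Q v) := by
      unfold coneDir; rw [det2_pair, det2_self]; ring
    have h2 : det2 (Q p - Q v) (coneDir Q v p q x)
        = (1 - x) * det2 (Q p - Q v) (Q q - Q v) := by
      unfold coneDir; rw [det2_pair_right, det2_self]; ring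
    rw [h0, det2_zero_left] at h1
    rw [h0, det2_zero_right] at h2
    have hx0 : x = 0 := by nlinarith
    have hx1 : x = 1 := by nlinarith
    norm_num [hx0] at hx1
  have hBne : ∀ y ∈ Set.Icc (0:ℝ) 1, coneDir Q v r s2 y ≠ 0 := by
    intro y hy h0
    have h1 : det2 (coneDir Q v r s2 y) (Q s2 - Q v)
        = y * det2 (Q r - Q v) (Q s2 - Q v) := by
      unfold coneDir; rw [det2_pair, det2_self]; ring
    have h2 : det2 (Q r - Q v) (coneDir Q v r s2 y)
        = (1 - y) * det2 (Q r - Q v) (Q s2 - Q v) := by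
      unfold coneDir; rw [det2_pair_right, det2_self]; ring
    rw [h0, det2_zero_left] at h1
    rw [h0, det2_zero_right] at h2
    have hy0 : y = 0 := by nlinarith
    have hy1 : y = 1 := by nlinarith
    norm_num [hy0] at hy1
  -- the two cones meet only at the apex
  have hkey : ∀ x ∈ Set.Icc (0:ℝ) 1, ∀ y ∈ Set.Icc (0:ℝ) 1,
      ‖coneDir Q v r s2 y‖ • coneDir Q v p q x ≠ ‖coneDir Q v p q x‖ • coneDir Q v r s2 y := by
    intro x hx y hy heqc
    set aa := coneDir Q v p q x with haa
    set bb := coneDir Q v r s2 y with hbb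
    have hna : 0 < ‖aa‖ := norm_pos_iff.mpr (hAne x hx)
    have hnb : 0 < ‖bb‖ := norm_pos_iff.mpr (hBne y hy)
    set s0 : ℝ := min 1 (‖bb‖ / ‖aa‖) with hs0
    have hs0pos : 0 < s0 := lt_min one_pos (div_pos hnb hna)
    have hs0le1 : s0 ≤ 1 := min_le_left _ _
    set t0 : ℝ := s0 * ‖aa‖ / ‖bb‖ with ht0
    have ht0pos : 0 < t0 := div_pos (mul_pos hs0pos hna) hnb
    have ht0le1 : t0 ≤ 1 := by
      rw [ht0, div_le_one hnb]
      have : s0 ≤ ‖bb‖ / ‖aa‖ := min_le_right _ _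
      calc s0 * ‖aa‖ ≤ (‖bb‖ / ‖aa‖) * ‖aa‖ := mul_le_mul_of_nonneg_right this (le_of_lt hna)
        _ = ‖bb‖ := by field_simp
    have hst : s0 • aa = t0 • bb := by
      have h5 : s0 • aa = (s0 / ‖bb‖) • (‖bb‖ • aa) := by
        rw [smul_smul]; congr 1; field_simp
      rw [h5, heqc, smul_smul, ht0]
      congr 1
      field_simp
      try ring
    have hzS : Q v + s0 • aa ∈ convexHull ℝ (Q '' ↑S) := by
      rw [hSt]
      have hz : Q v + s0 • aa
          = (1 - s0) • Q v + (s0 * x) • Q p + (s0 * (1 - x)) • Q q := by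
        rw [haa]; unfold coneDir; module
      rw [hz]
      exact mem_hull_triple v p q (by linarith) (mul_nonneg (le_of_lt hs0pos) hx.1)
        (mul_nonneg (le_of_lt hs0pos) (by linarith [hx.2])) (by ring)
    have hzT : Q v + s0 • aa ∈ convexHull ℝ (Q '' ↑T) := by
      rw [hst, hTt]
      have hz : Q v + t0 • bb
          = (1 - t0) • Q v + (t0 * y) • Q r + (t0 * (1 - y)) • Q s2 := by
        rw [hbb]; unfold coneDir; module
      rw [hz]
      exact mem_hull_triple v r s2 (by linarith) (mul_nonneg (le_of_lt ht0pos) hy.1)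
        (mul_nonneg (le_of_lt ht0pos) (by linarith [hy.2])) (by ring)
    have hmem := hiQ ▸ Set.mem_inter hzS hzT
    rw [Set.mem_singleton_iff] at hmem
    have : s0 • aa = 0 := by
      have := sub_eq_zero.mpr hmem
      rwa [add_sub_cancel_left] at this
    rcases smul_eq_zero.mp this with h | h
    · exact absurd h (ne_of_gt hs0pos)
    · exact hAne x hx h
  -- positive minimum of the gap function
  set g : ℝ × ℝ → ℝ := fun xy =>
    ‖‖coneDir Q v r s2 xy.2‖ • coneDir Q v p q xy.1
      - ‖coneDir Q v p q xy.1‖ • coneDir Q v r s2 xy.2‖ with hgdef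
  have hca := coneDir_cont Q v p q
  have hcb := coneDir_cont Q v r s2
  have hg : Continuous g := by
    apply Continuous.norm
    exact (((hcb.comp continuous_snd).norm).smul (hca.comp continuous_fst)).sub
      (((hca.comp continuous_fst).norm).smul (hcb.comp continuous_snd))
  obtain ⟨xy0, hxy0mem, hxy0min⟩ :=
    (isCompact_Icc.prod isCompact_Icc).exists_isMinOn
      ⟨(0, 0), Set.mk_mem_prod ⟨le_rfl, zero_le_one⟩ ⟨le_rfl, zero_le_one⟩⟩
      hg.continuousOn
  set m0 := g xy0 with hm0def
  have hm0 : 0 < m0 := by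
    rw [hm0def, hgdef]
    simp only
    rw [norm_pos_iff, sub_ne_zero]
    exact hkey xy0.1 hxy0mem.1 xy0.2 hxy0mem.2
  -- radius and perturbation size
  set R0 : ℝ := ‖Q p - Q v‖ + ‖Q q - Q v‖ + ‖Q r - Q v‖ + ‖Q s2 - Q v‖ with hR0
  have hR0nn : 0 ≤ R0 := by positivity
  set R : ℝ := R0 + 1 with hRdef
  have hR1 : 1 ≤ R := by linarith
  have hRpos : 0 < R := by linarith
  set ε := min (1/2 : ℝ) (m0 / (16 * R)) with hεdef
  have hε : 0 < ε := lt_min (by norm_num) (div_pos hm0 (by linarith))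
  have hε2 : ε ≤ 1/2 := min_le_left _ _
  have hε3 : ε ≤ m0 / (16 * R) := min_le_right _ _
  filter_upwards [Metric.ball_mem_nhds Q hε] with Q' hball hAIS' hAIT'
  intro z hz
  rw [Set.mem_singleton_iff]
  by_contra hzne
  have hd : ∀ j, dist (Q' j) (Q j) ≤ ε :=
    fun j => le_of_lt (lt_of_le_of_lt (dist_le_pi_dist Q' Q j) (Metric.mem_ball.mp hball))
  obtain ⟨w, hw0, hw1, hwz⟩ := (mem_hull_iff_weights (injOn_of_AI hAIS')).mp hz.1
  obtain ⟨u, hu0, hu1, huz⟩ := (mem_hull_iff_weights (injOn_of_AI hAIT')).mp hz.2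
  rw [hSt] at hw0 hw1 hwz
  rw [hTt] at hu0 hu1 huz
  rw [sum_triple w hvp hvq hpq] at hw1
  rw [sum_triple (fun i => w i • Q' i) hvp hvq hpq] at hwz
  rw [sum_triple u hvr hvs hrs] at hu1
  rw [sum_triple (fun i => u i • Q' i) hvr hvs hrs] at huz
  have hwp := hw0 p (by simp)
  have hwq := hw0 q (by simp)
  have hur := hu0 r (by simp)
  have hus := hu0 s2 (by simp)
  have hz1 : z - Q' v = w p • (Q' p - Q' v) + w q • (Q' q - Q' v) := by
    rw [← hwz, show w v = 1 - (w p + w q) by linarith]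
    module
  have hz2 : z - Q' v = u r • (Q' r - Q' v) + u s2 • (Q' s2 - Q' v) := by
    rw [← huz, show u v = 1 - (u r + u s2) by linarith]
    module
  by_cases hlam : w p + w q = 0
  · refine hzne (sub_eq_zero.mp ?_)
    rw [hz1, show w p = 0 by linarith, show w q = 0 by linarith]
    simp
  by_cases hmu : u r + u s2 = 0
  · refine hzne (sub_eq_zero.mp ?_)
    rw [hz2, show u r = 0 by linarith, show u s2 = 0 by linarith]
    simp
  have hlampos : 0 < w p + w q := lt_of_le_of_ne (by linarith) (Ne.symm hlam)
  have hmupos : 0 < u r + u s2 := lt_of_le_of_ne (by linarith) (Ne.symm hmu)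
  set x := w p / (w p + w q) with hxdef
  set y := u r / (u r + u s2) with hydef
  have hxmem : x ∈ Set.Icc (0:ℝ) 1 :=
    ⟨div_nonneg hwp (le_of_lt hlampos), (div_le_one hlampos).mpr (by linarith)⟩
  have hymem : y ∈ Set.Icc (0:ℝ) 1 :=
    ⟨div_nonneg hur (le_of_lt hmupos), (div_le_one hmupos).mpr (by linarith)⟩
  have hza : z - Q' v = (w p + w q) • coneDir Q' v p q x := by
    rw [hxdef, smul_coneDir v p q hlam]; exact hz1
  have hzb : z - Q' v = (u r + u s2) • coneDir Q' v r s2 y := by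
    rw [hydef, smul_coneDir v r s2 hmu]; exact hz2
  set a' := coneDir Q' v p q x with ha'
  set b' := coneDir Q' v r s2 y with hb'
  have hab' : (w p + w q) • a' = (u r + u s2) • b' := by rw [← hza, ← hzb]
  have heq2 : ‖b'‖ • a' = ‖a'‖ • b' := by
    have h3 : a' = ((u r + u s2) / (w p + w q)) • b' := by
      have h4 : a' = (w p + w q)⁻¹ • ((u r + u s2) • b') := by
        rw [← hab', inv_smul_smul₀ hlam]
      rw [h4, smul_smul, div_eq_mul_inv, mul_comm]
    have hc0 : 0 ≤ (u r + u s2) / (w p + w q) :=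
      div_nonneg (le_of_lt hmupos) (le_of_lt hlampos)
    rw [h3, norm_smul, Real.norm_eq_abs, abs_of_nonneg hc0, smul_smul, mul_comm]
  set aQ := coneDir Q v p q x with haQ
  set bQ := coneDir Q v r s2 y with hbQ
  have hmin : m0 ≤ ‖‖bQ‖ • aQ - ‖aQ‖ • bQ‖ :=
    isMinOn_iff.mp hxy0min (x, y) (Set.mk_mem_prod hxmem hymem)
  have hpa : ‖a' - aQ‖ ≤ 2 * ε := coneDir_perturb v p q hxmem hd
  have hpb : ‖b' - bQ‖ ≤ 2 * ε := coneDir_perturb v r s2 hymem hd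
  have hnaQ : ‖aQ‖ ≤ R0 := by
    have := coneDir_bound Q v p q hxmem
    have h1 : 0 ≤ ‖Q r - Q v‖ := norm_nonneg _
    have h2 : 0 ≤ ‖Q s2 - Q v‖ := norm_nonneg _
    rw [haQ]; rw [hR0]; linarith
  have hnbQ : ‖bQ‖ ≤ R0 := by
    have := coneDir_bound Q v r s2 hymem
    have h1 : 0 ≤ ‖Q p - Q v‖ := norm_nonneg _
    have h2 : 0 ≤ ‖Q q - Q v‖ := norm_nonneg _
    rw [hbQ]; rw [hR0]; linarith
  have hna' : ‖a'‖ ≤ R := by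
    have h5 : a' = aQ + (a' - aQ) := by abel
    calc ‖a'‖ = ‖aQ + (a' - aQ)‖ := by rw [← h5]
      _ ≤ ‖aQ‖ + ‖a' - aQ‖ := norm_add_le _ _
      _ ≤ R0 + 2 * ε := add_le_add hnaQ hpa
      _ ≤ R := by rw [hRdef]; linarith
  have hnb' : ‖b'‖ ≤ R := by
    have h5 : b' = bQ + (b' - bQ) := by abel
    calc ‖b'‖ = ‖bQ + (b' - bQ)‖ := by rw [← h5]
      _ ≤ ‖bQ‖ + ‖b' - bQ‖ := norm_add_le _ _
      _ ≤ R0 + 2 * ε := add_le_add hnbQ hpb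
      _ ≤ R := by rw [hRdef]; linarith
  have hX : ‖bQ‖ • aQ - ‖aQ‖ • bQ
      = (‖b'‖ • a' - ‖a'‖ • b')
        - ((‖b'‖ - ‖bQ‖) • a' + ‖bQ‖ • (a' - aQ)
            - (‖a'‖ - ‖aQ‖) • b' - ‖aQ‖ • (b' - bQ)) := by
    module
  rw [heq2, sub_self, zero_sub] at hX
  have hE : ‖‖bQ‖ • aQ - ‖aQ‖ • bQ‖ ≤ 8 * ε * R := by
    rw [hX, norm_neg]
    have e1 : ‖(‖b'‖ - ‖bQ‖) • a'‖ ≤ 2 * ε * R := by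
      rw [norm_smul, Real.norm_eq_abs]
      calc |‖b'‖ - ‖bQ‖| * ‖a'‖ ≤ ‖b' - bQ‖ * ‖a'‖ :=
          mul_le_mul_of_nonneg_right (abs_norm_sub_norm_le _ _) (norm_nonneg _)
        _ ≤ (2 * ε) * R := by
            apply mul_le_mul hpb hna' (norm_nonneg _) (by linarith)
        _ = 2 * ε * R := by ring
    have e2 : ‖‖bQ‖ • (a' - aQ)‖ ≤ 2 * ε * R := by
      rw [norm_smul, Real.norm_eq_abs, abs_of_nonneg (norm_nonneg _)]
      calc ‖bQ‖ * ‖a' - aQ‖ ≤ R * (2 * ε) := by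
            apply mul_le_mul (by linarith) hpa (norm_nonneg _) (by linarith)
        _ = 2 * ε * R := by ring
    have e3 : ‖(‖a'‖ - ‖aQ‖) • b'‖ ≤ 2 * ε * R := by
      rw [norm_smul, Real.norm_eq_abs]
      calc |‖a'‖ - ‖aQ‖| * ‖b'‖ ≤ ‖a' - aQ‖ * ‖b'‖ :=
          mul_le_mul_of_nonneg_right (abs_norm_sub_norm_le _ _) (norm_nonneg _)
        _ ≤ (2 * ε) * R := by
            apply mul_le_mul hpa hnb' (norm_nonneg _) (by linarith)
        _ = 2 * ε * R := by ring
    have e4 : ‖‖aQ‖ • (b' - bQ)‖ ≤ 2 * ε * R := by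
      rw [norm_smul, Real.norm_eq_abs, abs_of_nonneg (norm_nonneg _)]
      calc ‖aQ‖ * ‖b' - bQ‖ ≤ R * (2 * ε) := by
            apply mul_le_mul (by linarith) hpb (norm_nonneg _) (by linarith)
        _ = 2 * ε * R := by ring
    calc ‖(‖b'‖ - ‖bQ‖) • a' + ‖bQ‖ • (a' - aQ) - (‖a'‖ - ‖aQ‖) • b' - ‖aQ‖ • (b' - bQ)‖
        ≤ ‖(‖b'‖ - ‖bQ‖) • a' + ‖bQ‖ • (a' - aQ) - (‖a'‖ - ‖aQ‖) • b'‖ + ‖‖aQ‖ • (b' - bQ)‖ :=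
          norm_sub_le _ _
      _ ≤ (‖(‖b'‖ - ‖bQ‖) • a' + ‖bQ‖ • (a' - aQ)‖ + ‖(‖a'‖ - ‖aQ‖) • b'‖) + ‖‖aQ‖ • (b' - bQ)‖ := by
          gcongr
          exact norm_sub_le _ _
      _ ≤ ((‖(‖b'‖ - ‖bQ‖) • a'‖ + ‖‖bQ‖ • (a' - aQ)‖) + ‖(‖a'‖ - ‖aQ‖) • b'‖) + ‖‖aQ‖ • (b' - bQ)‖ := by
          gcongr
          exact norm_add_le _ _
      _ ≤ ((2 * ε * R + 2 * ε * R) + 2 * ε * R) + 2 * ε * R := by gcongr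
      _ = 8 * ε * R := by ring
  have h8 : 8 * ε * R ≤ m0 / 2 := by
    have := mul_le_mul_of_nonneg_right hε3 (le_of_lt hRpos)
    calc 8 * ε * R ≤ 8 * (m0 / (16 * R)) * R := by nlinarith
      _ = m0 / 2 := by field_simp; ring
  have hfin : m0 ≤ m0 / 2 := le_trans hmin (le_trans hE h8)
  clear_value m0
  linarith


lemma D1_at {Q : Fin N → Pt} (hQ : Q ∈ Mplus Δ) {τ : Finset (Fin N)} (hτ : τ ∈ Δ.faces)
    {i : Fin N} (hi : i ∉ τ) : Q i ∉ convexHull ℝ (Q '' ↑τ) := by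
  intro hmem
  have hins : convexHull ℝ (Q '' ↑(insert i τ)) = convexHull ℝ (Q '' ↑τ) := by
    rw [Finset.coe_insert, Set.image_insert_eq]
    apply Set.Subset.antisymm
    · exact convexHull_min (Set.insert_subset hmem (subset_convexHull ℝ _)) (convex_convexHull ℝ _)
    · exact convexHull_mono (Set.subset_insert _ _)
  have hfaces : insert i τ ∈ Δ.faces :=
    hQ.1.2.2.2 (insert i τ) (Finset.insert_nonempty _ _) ⟨τ, hτ, hins⟩
  have hAI := hQ.1.1 _ hfaces
  obtain ⟨w, hw0, hw1, hwz⟩ := (mem_hull_iff_weights (injOn_of_AI (hQ.1.1 τ hτ))).mp hmem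
  set w' : Fin N → ℝ := fun t => if t = i then -1 else w t with hw'
  have hsum : ∑ t ∈ insert i τ, w' t = 0 := by
    rw [Finset.sum_insert hi]
    have : ∑ t ∈ τ, w' t = ∑ t ∈ τ, w t :=
      Finset.sum_congr rfl (fun t ht => by
        simp [hw', ne_of_mem_of_not_mem ht hi])
    rw [this, hw1, hw']
    simp
  have hcombo : ∑ t ∈ insert i τ, w' t • Q t = 0 := by
    rw [Finset.sum_insert hi]
    have : ∑ t ∈ τ, w' t • Q t = ∑ t ∈ τ, w t • Q t :=
      Finset.sum_congr rfl (fun t ht => by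
        simp [hw', ne_of_mem_of_not_mem ht hi])
    rw [this, hwz, hw']
    simp
  have hzero := H4 hAI hsum hcombo i (Finset.mem_insert_self i τ)
  rw [hw'] at hzero
  simp at hzero

lemma mem_Mplus_of_good {Q' : Fin N → Pt}
    (hC1 : ∀ σ ∈ Δ.faces, AffineIndependent ℝ (fun i : ↑σ => Q' i.1))
    (hC5 : ∀ σ ∈ Δ.faces, σ.card = 3 → 0 < signedArea Q' (Δ.orient σ))
    (hCD1 : ∀ τ ∈ Δ.faces, ∀ i, i ∉ τ → Q' i ∉ convexHull ℝ (Q' '' ↑τ))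
    (hCD2 : ∀ S ∈ Δ.faces, ∀ T ∈ Δ.faces, S.card = 3 → T.card = 3 → S ∩ T = ∅ →
        convexHull ℝ (Q' '' ↑S) ∩ convexHull ℝ (Q' '' ↑T) = ∅)
    (hCcone : ∀ S ∈ Δ.faces, ∀ T ∈ Δ.faces, S.card = 3 → T.card = 3 → ∀ v, S ∩ T = {v} →
        convexHull ℝ (Q' '' ↑S) ∩ convexHull ℝ (Q' '' ↑T) ⊆ {Q' v}) :
    Q' ∈ Mplus Δ := by
  have P2 : ∀ S ∈ Δ.faces, ∀ T ∈ Δ.faces, S.card = 3 → T.card = 3 →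
      convexHull ℝ (Q' '' ↑S) ∩ convexHull ℝ (Q' '' ↑T) = convexHull ℝ (Q' '' ↑(S ∩ T)) := by
    intro S hS T hT hS3 hT3
    have hcle : (S ∩ T).card ≤ 3 :=
      le_trans (Finset.card_le_card Finset.inter_subset_left) hS3.le
    rcases (by omega : (S ∩ T).card = 0 ∨ (S ∩ T).card = 1 ∨ (S ∩ T).card = 2
        ∨ (S ∩ T).card = 3) with hc | hc | hc | hc
    · have h0 : S ∩ T = ∅ := Finset.card_eq_zero.mp hc
      rw [hCD2 S hS T hT hS3 hT3 h0, h0]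
      simp
    · obtain ⟨v, hv⟩ := Finset.card_eq_one.mp hc
      have hvS : v ∈ S := Finset.mem_of_mem_inter_left (hv ▸ Finset.mem_singleton_self v)
      have hvT : v ∈ T := Finset.mem_of_mem_inter_right (hv ▸ Finset.mem_singleton_self v)
      rw [hv]
      apply Set.Subset.antisymm
      · intro z hzz
        have hz := hCcone S hS T hT hS3 hT3 v hv hzz
        rw [Set.mem_singleton_iff] at hz
        rw [hz]
        simp
      · intro z hzz
        simp only [Finset.coe_singleton, Set.image_singleton, convexHull_singleton,
          Set.mem_singleton_iff] at hzz
        rw [hzz]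
        exact ⟨mem_hull_self hvS, mem_hull_self hvT⟩
    · have hne : S ≠ T := by
        intro h
        rw [h, Finset.inter_self] at hc
        omega
      exact edge_inter Δ hS hT hS3 hT3 hne hc (hC1 S hS) (hC1 T hT)
        (hC5 S hS hS3) (hC5 T hT hT3)
    · have h1 : S ∩ T = S := Finset.eq_of_subset_of_card_le Finset.inter_subset_left (by omega)
      have h2 : S ∩ T = T := Finset.eq_of_subset_of_card_le Finset.inter_subset_right (by omega)
      have hTS : T = S := by rw [← h2, h1]
      rw [h1, hTS, Set.inter_self]
  refine ⟨⟨fun σ hσ => hC1 σ hσ, ?_, ?_, ?_⟩, hC5⟩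
  · -- down closure
    intro σ hσ ρ hρsub hρne
    exact ⟨ρ, Δ.down_closed σ hσ ρ hρsub hρne, rfl⟩
  · -- intersections
    intro σ hσ τ hτ hne_inter
    obtain ⟨S, hS, hS3, hσS⟩ := Δ.pure σ hσ
    obtain ⟨T, hT, hT3, hτT⟩ := Δ.pure τ hτ
    have hP2 := P2 S hS T hT hS3 hT3
    have hsub2 : convexHull ℝ (Q' '' ↑σ) ∩ convexHull ℝ (Q' '' ↑τ)
        ⊆ convexHull ℝ (Q' '' ↑(σ ∩ τ)) := by
      intro z hz
      have hzST : z ∈ convexHull ℝ (Q' '' ↑(S ∩ T)) := by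
        rw [← hP2]
        exact ⟨hull_mono hσS hz.1, hull_mono hτT hz.2⟩
      have h1 : z ∈ convexHull ℝ (Q' '' ↑σ) ∩ convexHull ℝ (Q' '' ↑(S ∩ T)) := ⟨hz.1, hzST⟩
      rw [sub_simplex_inter (hC1 S hS) hσS Finset.inter_subset_left] at h1
      have he1 : σ ∩ (S ∩ T) = σ ∩ T := by
        ext i
        simp only [Finset.mem_inter]
        exact ⟨fun ⟨u1, _, u3⟩ => ⟨u1, u3⟩, fun ⟨u1, u2⟩ => ⟨u1, hσS u1, u2⟩⟩
      rw [he1] at h1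
      have h2 : z ∈ convexHull ℝ (Q' '' ↑(σ ∩ T)) ∩ convexHull ℝ (Q' '' ↑τ) := ⟨h1, hz.2⟩
      rw [sub_simplex_inter (hC1 T hT) Finset.inter_subset_right hτT] at h2
      have he2 : (σ ∩ T) ∩ τ = σ ∩ τ := by
        ext i
        simp only [Finset.mem_inter]
        exact ⟨fun ⟨⟨u1, _⟩, u3⟩ => ⟨u1, u3⟩, fun ⟨u1, u2⟩ => ⟨⟨u1, hτT u2⟩, u2⟩⟩
      rwa [he2] at h2
    have hρne : (σ ∩ τ).Nonempty := by
      rw [Finset.nonempty_iff_ne_empty]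
      intro hemp
      obtain ⟨z, hz⟩ := hne_inter
      have := hsub2 hz
      rw [hemp] at this
      simp at this
    exact ⟨σ ∩ τ, hρne, Finset.inter_subset_left, Finset.inter_subset_right,
      Set.Subset.antisymm hsub2
        (Set.subset_inter (hull_mono Finset.inter_subset_left)
          (hull_mono Finset.inter_subset_right))⟩
  · -- exactness
    intro σ hσne hmem
    obtain ⟨τ, hτ, heq⟩ := hmem
    have hsub : σ ⊆ τ := by
      intro i hiσ
      by_contra hiτ
      exact hCD1 τ hτ i hiτ (heq ▸ mem_hull_self hiσ)
    exact Δ.down_closed τ hτ σ hsub hσne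

lemma signedArea_cont (o : Fin 3 → Fin N) :
    Continuous (fun Q' : Fin N → Pt => signedArea Q' o) := by
  have hc : ∀ (i : Fin N) (m : Fin 2), Continuous (fun Q' : Fin N → Pt => Q' i m) :=
    fun i m => (PiLp.continuous_apply 2 _ m).comp (continuous_apply i)
  have hrw : (fun Q' : Fin N → Pt => signedArea Q' o)
      = fun Q' => ((Q' (o 1)) 0 * (Q' (o 2)) 1 - (Q' (o 1)) 0 * (Q' (o 1)) 1
          - (Q' (o 0)) 0 * (Q' (o 2)) 1 + (Q' (o 0)) 0 * (Q' (o 1)) 1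
          - ((Q' (o 1)) 1 * (Q' (o 2)) 0 - (Q' (o 1)) 1 * (Q' (o 1)) 0
            - (Q' (o 0)) 1 * (Q' (o 2)) 0 + (Q' (o 0)) 1 * (Q' (o 1)) 0)) / 2 := by
    funext Q'
    simp only [signedArea, det2, PiLp.sub_apply]
    ring
  rw [hrw]
  apply Continuous.div_const
  continuity

theorem isOpen_Mplus : IsOpen (Mplus Δ) := by
  rw [isOpen_iff_mem_nhds]
  intro Q hQ
  have hE5 : ∀ σ ∈ Δ.faces, ∀ᶠ Q' in nhds Q, σ.card = 3 → 0 < signedArea Q' (Δ.orient σ) := by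
    intro σ hσ
    by_cases h3 : σ.card = 3
    · have hopen : IsOpen {Q' : Fin N → Pt | 0 < signedArea Q' (Δ.orient σ)} :=
        isOpen_lt continuous_const (signedArea_cont (Δ.orient σ))
      exact Filter.eventually_of_mem (hopen.mem_nhds (hQ.2 σ hσ h3)) (fun Q' h _ => h)
    · exact Filter.Eventually.of_forall (fun Q' h => absurd h h3)
  have hE1 : ∀ σ ∈ Δ.faces, ∀ᶠ Q' in nhds Q,
      AffineIndependent ℝ (fun i : ↑σ => Q' i.1) := by
    intro σ hσ
    have hcard := Δ.card_le_three σ hσ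
    have hcardpos : 0 < σ.card := Finset.card_pos.mpr (Δ.mem_nonempty σ hσ)
    rcases (by omega : σ.card = 1 ∨ σ.card = 2 ∨ σ.card = 3) with h | h | h
    · obtain ⟨a, rfl⟩ := Finset.card_eq_one.mp h
      exact Filter.Eventually.of_forall (fun Q' => AI_single a)
    · obtain ⟨a, b, hab, rfl⟩ := Finset.card_eq_two.mp h
      have hne : Q a ≠ Q b := fun hh =>
        hab ((injOn_of_AI (hQ.1.1 _ hσ)) (by simp) (by simp) hh)
      have hopen : IsOpen {Q' : Fin N → Pt | Q' a ≠ Q' b} :=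
        isOpen_ne_fun (continuous_apply a) (continuous_apply b)
      exact Filter.eventually_of_mem (hopen.mem_nhds hne) (fun Q' h' => AI_pair hab h')
    · refine (hE5 σ hσ).mono ?_
      intro Q' h5
      have hpos := h5 h
      have htri := orient_triple Δ hσ h
      have hinj := orient_inj Δ hσ h
      have hdet : det2 (Q' (Δ.orient σ 1) - Q' (Δ.orient σ 0))
          (Q' (Δ.orient σ 2) - Q' (Δ.orient σ 0)) ≠ 0 := by
        have hh := det_orient Q' (Δ.orient σ) 0
        rw [show ((0 : Fin 3) + 1) = 1 from rfl, show ((0 : Fin 3) + 2) = 2 from rfl] at hh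
        rw [hh]
        linarith
      have hAI := AI_triple (Q := Q')
        (fun hh => absurd (hinj hh) (by decide : ¬((0 : Fin 3) = 1)))
        (fun hh => absurd (hinj hh) (by decide : ¬((0 : Fin 3) = 2)))
        (fun hh => absurd (hinj hh) (by decide : ¬((1 : Fin 3) = 2))) hdet
      rw [htri]
      exact hAI
  have hCD1 : ∀ τ ∈ Δ.faces, ∀ᶠ Q' in nhds Q, ∀ i, i ∉ τ →
      Q' i ∉ convexHull ℝ (Q' '' ↑τ) := by
    intro τ hτ
    rw [Filter.eventually_all]
    intro i
    by_cases hi : i ∈ τ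
    · exact Filter.Eventually.of_forall (fun Q' h => absurd hi h)
    · have hnot := D1_at Δ hQ hτ hi
      have hKco : IsCompact (convexHull ℝ (Q '' ↑τ)) :=
        ((τ.finite_toSet).image Q).isCompact_convexHull ℝ
      obtain ⟨j, hj⟩ := Δ.mem_nonempty τ hτ
      have hKne : (convexHull ℝ (Q '' ↑τ)).Nonempty := ⟨Q j, mem_hull_self hj⟩
      obtain ⟨y0, hy0, hy0d⟩ := hKco.exists_infDist_eq_dist hKne (Q i)
      set δ := Metric.infDist (Q i) (convexHull ℝ (Q '' ↑τ)) with hδdef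
      have hδ : 0 < δ := by
        rw [hy0d]
        exact dist_pos.mpr (fun h => hnot (h ▸ hy0))
      filter_upwards [Metric.ball_mem_nhds Q (show (0:ℝ) < δ/3 by linarith)] with Q' hball
      intro _ hmem'
      have hd : ∀ j' ∈ τ, dist (Q' j') (Q j') ≤ δ/3 := fun j' _ =>
        le_of_lt (lt_of_le_of_lt (dist_le_pi_dist Q' Q j') (Metric.mem_ball.mp hball))
      obtain ⟨z', hz', hdz⟩ := hull_approx hd (Q' i) hmem'
      have h1 : dist (Q i) z' ≤ dist (Q i) (Q' i) + dist (Q' i) z' := dist_triangle _ _ _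
      have h2 : δ ≤ dist (Q i) z' := Metric.infDist_le_dist_of_mem hz'
      have h3 : dist (Q i) (Q' i) < δ/3 := by
        rw [dist_comm]
        exact lt_of_le_of_lt (dist_le_pi_dist Q' Q i) (Metric.mem_ball.mp hball)
      linarith
  have hCD2 : ∀ S ∈ Δ.faces, ∀ T ∈ Δ.faces, ∀ᶠ Q' in nhds Q,
      S.card = 3 → T.card = 3 → S ∩ T = ∅ →
      convexHull ℝ (Q' '' ↑S) ∩ convexHull ℝ (Q' '' ↑T) = ∅ := by
    intro S hS T hT
    by_cases hc : S.card = 3 ∧ T.card = 3 ∧ S ∩ T = ∅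
    · obtain ⟨hS3, hT3, hST⟩ := hc
      have hdisj : convexHull ℝ (Q '' ↑S) ∩ convexHull ℝ (Q '' ↑T) = ∅ := by
        by_contra h
        obtain ⟨ρ, hρne, hρS, hρT, _⟩ :=
          hQ.1.2.2.1 S hS T hT (Set.nonempty_iff_ne_empty.mpr h)
        have hsub : ρ ⊆ S ∩ T := Finset.subset_inter hρS hρT
        rw [hST] at hsub
        obtain ⟨i0, hi0⟩ := hρne
        exact absurd (hsub hi0) (Finset.notMem_empty i0)
      have hK1 : IsCompact (convexHull ℝ (Q '' ↑S)) :=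
        ((S.finite_toSet).image Q).isCompact_convexHull ℝ
      have hK2 : IsCompact (convexHull ℝ (Q '' ↑T)) :=
        ((T.finite_toSet).image Q).isCompact_convexHull ℝ
      obtain ⟨jS, hjS⟩ := Δ.mem_nonempty S hS
      obtain ⟨jT, hjT⟩ := Δ.mem_nonempty T hT
      have hK1ne : (convexHull ℝ (Q '' ↑S)).Nonempty := ⟨Q jS, mem_hull_self hjS⟩
      have hK2ne : (convexHull ℝ (Q '' ↑T)).Nonempty := ⟨Q jT, mem_hull_self hjT⟩
      obtain ⟨x0, hx0K, hx0min⟩ := hK1.exists_isMinOn hK1ne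
        (Metric.continuous_infDist_pt (convexHull ℝ (Q '' ↑T))).continuousOn
      set δ := Metric.infDist x0 (convexHull ℝ (Q '' ↑T)) with hδdef
      have hδ : 0 < δ := by
        obtain ⟨y0, hy0, hy0d⟩ := hK2.exists_infDist_eq_dist hK2ne x0
        rw [hδdef, hy0d]
        refine dist_pos.mpr (fun h => ?_)
        have : x0 ∈ convexHull ℝ (Q '' ↑S) ∩ convexHull ℝ (Q '' ↑T) := ⟨hx0K, h ▸ hy0⟩
        rw [hdisj] at this
        exact this
      filter_upwards [Metric.ball_mem_nhds Q (show (0:ℝ) < δ/3 by linarith)] with Q' hball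
      intro _ _ _
      rw [Set.eq_empty_iff_forall_notMem]
      rintro z ⟨hz1, hz2⟩
      have hd : ∀ j' : Fin N, dist (Q' j') (Q j') ≤ δ/3 := fun j' =>
        le_of_lt (lt_of_le_of_lt (dist_le_pi_dist Q' Q j') (Metric.mem_ball.mp hball))
      obtain ⟨z1, hz1', hdz1⟩ := hull_approx (fun j' _ => hd j') z hz1
      obtain ⟨z2, hz2', hdz2⟩ := hull_approx (fun j' _ => hd j') z hz2
      have hge : δ ≤ dist z1 z2 := by
        have h5 : δ ≤ Metric.infDist z1 (convexHull ℝ (Q '' ↑T)) := isMinOn_iff.mp hx0min z1 hz1'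
        exact le_trans h5 (Metric.infDist_le_dist_of_mem hz2')
      have hle : dist z1 z2 ≤ dist z1 z + dist z z2 := dist_triangle _ _ _
      rw [dist_comm z1 z] at hle
      linarith
    · push_neg at hc
      exact Filter.Eventually.of_forall (fun Q' h1 h2 h3 => absurd h3 (Finset.nonempty_iff_ne_empty.mp (hc h1 h2)))
  have hCcone : ∀ S ∈ Δ.faces, ∀ T ∈ Δ.faces, ∀ᶠ Q' in nhds Q,
      ∀ v, S.card = 3 → T.card = 3 → S ∩ T = {v} →
      AffineIndependent ℝ (fun i : ↑S => Q' i.1) →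
      AffineIndependent ℝ (fun i : ↑T => Q' i.1) →
      convexHull ℝ (Q' '' ↑S) ∩ convexHull ℝ (Q' '' ↑T) ⊆ {Q' v} := by
    intro S hS T hT
    rw [Filter.eventually_all]
    intro v
    by_cases hc : S.card = 3 ∧ T.card = 3 ∧ S ∩ T = {v}
    · obtain ⟨h1, h2, h3⟩ := hc
      exact (cone_ev Δ hS hT h1 h2 h3 hQ).mono
        (fun Q' h _ _ _ hAIS hAIT => h hAIS hAIT)
    · refine Filter.Eventually.of_forall (fun Q' hS3 hT3 hST _ _ => absurd ⟨hS3, hT3, hST⟩ hc)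
  have e1 := (Filter.eventually_all_finset Δ.faces).mpr hE1
  have e5 := (Filter.eventually_all_finset Δ.faces).mpr hE5
  have ed1 := (Filter.eventually_all_finset Δ.faces).mpr hCD1
  have ed2 := (Filter.eventually_all_finset Δ.faces).mpr
    (fun S hS => (Filter.eventually_all_finset Δ.faces).mpr (hCD2 S hS))
  have ec := (Filter.eventually_all_finset Δ.faces).mpr
    (fun S hS => (Filter.eventually_all_finset Δ.faces).mpr (hCcone S hS))
  have hev : ∀ᶠ Q' in nhds Q, Q' ∈ Mplus Δ := by
    filter_upwards [e1, e5, ed1, ed2, ec] with Q' h1 h5 hd1 hd2 hc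
    exact mem_Mplus_of_good Δ h1 h5 hd1
      (fun S hS T hT hS3 hT3 hST => hd2 S hS T hT hS3 hT3 hST)
      (fun S hS T hT hS3 hT3 v hST =>
        hc S hS T hT v hS3 hT3 hST (h1 S hS) (h1 T hT))
  simpa only [Filter.eventually_iff, Set.setOf_mem_eq] using hev

-- STAGE6

end AuxLemmas

/-- `M_Δ(Q_ref)` is a path component of `M⁺_Δ` (in particular path-connected), and an open
subset of `ℝ^{2×N_V}`. -/
theorem stmt5 {N : ℕ} (hN : 3 ≤ N) (Δ : OrientedComplex N)
    (Qref : Fin N → Pt) (href : Qref ∈ Mplus Δ) :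
    Mmesh Δ Qref = pathComponentIn (Mplus Δ) Qref ∧
    IsPathConnected (Mmesh Δ Qref) ∧
    IsOpen (Mmesh Δ Qref) := by
  have hopen : IsOpen (Mplus Δ) := isOpen_Mplus Δ
  refine ⟨rfl, ?_, ?_⟩
  · exact isPathConnected_pathComponentIn href
  · exact hopen.pathComponentIn Qref

end PlanarMesh
end
end

section
/- Let [i_0,i_1,i_2] be an arbitrary oriented 2-face of Δ, suppose β₁, β₂ ≥ 0 and β₃ > 0, and let Q ∈ M_Δ(Q_ref). Then the edge lengths satisfy 2β₁/f(Q) ≤ ℓ_Q^ℓ[i_0,i_1,i_2] ≤ 2·√(f(Q)/β₃) + √2·‖Q_ref‖_F for all ℓ = 0,1,2. -/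
open scoped RealInnerProductSpace
open scoped Classical

noncomputable section

namespace PlanarMesh

variable {N : ℕ}

variable (Δ : OrientedComplex N)

/-! ### Auxiliary lemmas for `stmt7` -/

lemma det2_le_norm' (v w : Pt) : det2 v w ≤ ‖v‖ * ‖w‖ := by
  have h1 : ‖v‖ ^ 2 = v 0 ^ 2 + v 1 ^ 2 := by
    rw [EuclideanSpace.norm_eq, Real.sq_sqrt (by positivity)]
    simp [Fin.sum_univ_two, Real.norm_eq_abs, sq_abs]
  have h2 : ‖w‖ ^ 2 = w 0 ^ 2 + w 1 ^ 2 := by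
    rw [EuclideanSpace.norm_eq, Real.sq_sqrt (by positivity)]
    simp [Fin.sum_univ_two, Real.norm_eq_abs, sq_abs]
  have hv0 : 0 ≤ ‖v‖ := norm_nonneg v
  have hw0 : 0 ≤ ‖w‖ := norm_nonneg w
  simp only [det2]
  nlinarith [sq_nonneg (v 0 * w 0 + v 1 * w 1), mul_nonneg hv0 hw0,
    sq_nonneg (‖v‖ * ‖w‖ - (v 0 * w 1 - v 1 * w 0)),
    sq_nonneg (‖v‖ * ‖w‖ + (v 0 * w 1 - v 1 * w 0))]

lemma det2_rot' (a b c : Pt) : det2 (c - b) (a - c) = det2 (b - a) (c - b) := by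
  simp only [det2, PiLp.sub_apply]; ring

lemma tri_key' (β1 : ℝ) (hβ1 : 0 ≤ β1) (a b c : Pt) (hD : 0 < det2 (b - a) (c - b)) :
    0 < ‖b - c‖ ∧
    2 * β1 / ‖b - c‖ ≤
      β1 * (‖b - c‖ + ‖c - a‖ + ‖a - b‖) / det2 (b - a) (c - b) := by
  have h1 : det2 (b - a) (c - b) ≤ ‖b - c‖ * ‖c - a‖ := by
    calc det2 (b - a) (c - b) = det2 (c - b) (a - c) := (det2_rot' a b c).symm
      _ ≤ ‖c - b‖ * ‖a - c‖ := det2_le_norm' _ _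
      _ = ‖b - c‖ * ‖c - a‖ := by rw [norm_sub_rev c b, norm_sub_rev a c]
  have h2 : det2 (b - a) (c - b) ≤ ‖a - b‖ * ‖b - c‖ := by
    calc det2 (b - a) (c - b) ≤ ‖b - a‖ * ‖c - b‖ := det2_le_norm' _ _
      _ = ‖a - b‖ * ‖b - c‖ := by rw [norm_sub_rev b a, norm_sub_rev c b]
  have hbc : 0 < ‖b - c‖ := by
    rcases (norm_nonneg (b - c)).eq_or_lt with h | h
    · exfalso; rw [← h] at h2; simp at h2; linarith
    · exact h
  refine ⟨hbc, ?_⟩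
  rw [div_le_div_iff₀ hbc hD]
  nlinarith [mul_le_mul_of_nonneg_left h1 hβ1, mul_le_mul_of_nonneg_left h2 hβ1,
    mul_nonneg (mul_nonneg hβ1 hbc.le) hbc.le]

lemma lower_aux' {β L f : ℝ} (hβ : 0 ≤ β) (hL : 0 < L) (h : 2 * β / L ≤ f) :
    2 * β / f ≤ L := by
  rcases hβ.eq_or_lt with hb | hb
  · rw [← hb]; simpa using hL.le
  · have hf : 0 < f := lt_of_lt_of_le (by positivity) h
    rw [div_le_iff₀ hf]
    have h2 := mul_le_mul_of_nonneg_left h hL.le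
    rw [mul_div_cancel₀ _ (ne_of_gt hL)] at h2
    linarith

lemma pair_le_sum' {N : ℕ} {u v : Fin N} (huv : u ≠ v) (g : Fin N → ℝ)
    (hg : ∀ i, 0 ≤ g i) : g u + g v ≤ ∑ i, g i := by
  classical
  calc g u + g v = ∑ i ∈ ({u, v} : Finset (Fin N)), g i := (Finset.sum_pair huv).symm
    _ ≤ ∑ i, g i :=
        Finset.sum_le_sum_of_subset_of_nonneg (Finset.subset_univ _) (fun i _ _ => hg i)

set_option maxHeartbeats 1000000 in
lemma upper_main' {N : ℕ} (Q Qref : Fin N → Pt) (u v : Fin N) (f β3 : ℝ)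
    (hβ3 : 0 < β3) (hf : 0 ≤ f) (hL : 0 < ‖Q u - Q v‖)
    (hF : frobSq Q Qref ≤ 2 * (f / β3)) :
    ‖Q u - Q v‖ ≤ 2 * Real.sqrt (f / β3) + Real.sqrt 2 * frobNorm Qref := by
  have huv : u ≠ v := by
    intro h; rw [h] at hL; simp at hL
  set x := ‖Q u - Qref u‖ with hxdef
  set y := ‖Q v - Qref v‖ with hydef
  set a := ‖Qref u‖ with hadef
  set b := ‖Qref v‖ with hbdef
  have ht2 : Real.sqrt (f / β3) ^ 2 = f / β3 := Real.sq_sqrt (by positivity)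
  have hs2 : frobNorm Qref ^ 2 = ∑ i, ‖Qref i‖ ^ 2 := by
    unfold frobNorm
    exact Real.sq_sqrt (Finset.sum_nonneg fun i _ => sq_nonneg _)
  set t := Real.sqrt (f / β3) with htdef
  set s := frobNorm Qref with hsdef
  have ht0 : 0 ≤ t := Real.sqrt_nonneg _
  have hs0 : 0 ≤ s := Real.sqrt_nonneg _
  have hxy : x ^ 2 + y ^ 2 ≤ 2 * t ^ 2 := by
    have h1 : x ^ 2 + y ^ 2 ≤ frobSq Q Qref :=
      pair_le_sum' huv (fun i => ‖Q i - Qref i‖ ^ 2) (fun i => by positivity)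
    rw [ht2]; linarith
  have hab : a ^ 2 + b ^ 2 ≤ s ^ 2 := by
    rw [hs2]
    exact pair_le_sum' huv (fun i => ‖Qref i‖ ^ 2) (fun i => by positivity)
  have hx0 : 0 ≤ x := norm_nonneg _
  have hy0 : 0 ≤ y := norm_nonneg _
  have ha0 : 0 ≤ a := norm_nonneg _
  have hb0 : 0 ≤ b := norm_nonneg _
  have hL1 : ‖Q u - Q v‖ ≤ x + (a + b) + y := by
    have hdec : Q u - Q v = (Q u - Qref u) + (Qref u - Qref v) + (Qref v - Q v) := by abel
    calc ‖Q u - Q v‖ = ‖(Q u - Qref u) + (Qref u - Qref v) + (Qref v - Q v)‖ := by rw [← hdec]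
      _ ≤ ‖(Q u - Qref u) + (Qref u - Qref v)‖ + ‖Qref v - Q v‖ := norm_add_le _ _
      _ ≤ ‖Q u - Qref u‖ + ‖Qref u - Qref v‖ + ‖Qref v - Q v‖ := by
          have := norm_add_le (Q u - Qref u) (Qref u - Qref v); linarith
      _ ≤ x + (a + b) + y := by
          have h1 : ‖Qref u - Qref v‖ ≤ a + b := norm_sub_le _ _
          have h2 : ‖Qref v - Q v‖ = y := norm_sub_rev _ _
          linarith
  have hxyt : x + y ≤ 2 * t := by
    have hsq : (x + y) ^ 2 ≤ (2 * t) ^ 2 := by nlinarith [sq_nonneg (x - y)]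
    exact le_of_pow_le_pow_left₀ two_ne_zero (by positivity) hsq
  have habs : a + b ≤ Real.sqrt 2 * s := by
    have h2 : Real.sqrt 2 ^ 2 = 2 := Real.sq_sqrt (by norm_num)
    have hsq : (a + b) ^ 2 ≤ (Real.sqrt 2 * s) ^ 2 := by
      rw [mul_pow, h2]; nlinarith [sq_nonneg (a - b)]
    exact le_of_pow_le_pow_left₀ two_ne_zero (by positivity) hsq
  linarith

/-- Bounds on the edge lengths of any 2-face in terms of `f(Q)`. -/
theorem stmt7 {N : ℕ} (hN : 3 ≤ N) (Δ : OrientedComplex N)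
    (Qref : Fin N → Pt) (href : Qref ∈ Mplus Δ)
    (β1 β2 β3 : ℝ) (hβ1 : 0 ≤ β1) (hβ2 : 0 ≤ β2) (hβ3 : 0 < β3)
    (Q : Fin N → Pt) (hQ : Q ∈ Mmesh Δ Qref)
    (σ : Finset (Fin N)) (hσ : σ ∈ Δ.faces) (hcard : σ.card = 3) :
    ∀ ℓ : Fin 3,
      2 * β1 / ffun Δ Qref β1 β2 β3 Q ≤ edgeLen Q (Δ.orient σ) ℓ ∧
      edgeLen Q (Δ.orient σ) ℓ
        ≤ 2 * Real.sqrt (ffun Δ Qref β1 β2 β3 Q / β3) + Real.sqrt 2 * frobNorm Qref := by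
  classical
  have hplus : Q ∈ Mplus Δ := hQ.target_mem
  set o := Δ.orient σ with ho
  set f := ffun Δ Qref β1 β2 β3 Q with hfdef
  have hA : 0 < signedArea Q o := hplus.2 σ hσ hcard
  have hD : 0 < det2 (Q (o 1) - Q (o 0)) (Q (o 2) - Q (o 1)) := by
    have := hA; unfold signedArea at this; linarith
  set pa := Q (o 0) with hpa
  set pb := Q (o 1) with hpb
  set pc := Q (o 2) with hpc
  set D := det2 (pb - pa) (pc - pb) with hDdef
  set P := ‖pb - pc‖ + ‖pc - pa‖ + ‖pa - pb‖ with hPdef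
  -- the three triangle inequalities
  have key0 := tri_key' β1 hβ1 pa pb pc hD
  have key1 := tri_key' β1 hβ1 pb pc pa (by rw [det2_rot' pa pb pc]; exact hD)
  have key2 := tri_key' β1 hβ1 pc pa pb
    (by rw [det2_rot' pb pc pa, det2_rot' pa pb pc]; exact hD)
  have k1le : 2 * β1 / ‖pc - pa‖ ≤ β1 * P / D := by
    have h := key1.2
    rw [det2_rot' pa pb pc] at h
    calc 2 * β1 / ‖pc - pa‖ ≤ β1 * (‖pc - pa‖ + ‖pa - pb‖ + ‖pb - pc‖) / D := h
      _ = β1 * P / D := by rw [hPdef]; ring_nf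
  have k2le : 2 * β1 / ‖pa - pb‖ ≤ β1 * P / D := by
    have h := key2.2
    rw [det2_rot' pb pc pa, det2_rot' pa pb pc] at h
    calc 2 * β1 / ‖pa - pb‖ ≤ β1 * (‖pa - pb‖ + ‖pb - pc‖ + ‖pc - pa‖) / D := h
      _ = β1 * P / D := by rw [hPdef]; ring_nf
  -- the sum of β1/height over the triangle σ equals β1 * P / D
  have hSσ : (∑ ℓ : Fin 3, β1 / height Q o ℓ) = β1 * P / D := by
    have e0 : edgeLen Q o 0 = ‖pb - pc‖ := rfl
    have e1 : edgeLen Q o 1 = ‖pc - pa‖ := rfl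
    have e2 : edgeLen Q o 2 = ‖pa - pb‖ := rfl
    have hh : ∀ ℓ : Fin 3, height Q o ℓ = D / edgeLen Q o ℓ := by
      intro ℓ
      unfold height signedArea
      rw [hDdef, hpa, hpb, hpc]
      ring_nf
    rw [Fin.sum_univ_three, hh 0, hh 1, hh 2, e0, e1, e2,
      div_div_eq_mul_div, div_div_eq_mul_div, div_div_eq_mul_div, hPdef]
    ring
  -- nonnegativity of the three parts of f
  have hsum_nonneg : ∀ τ ∈ twoFaces Δ, 0 ≤ ∑ ℓ : Fin 3, β1 / height Q (Δ.orient τ) ℓ := by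
    intro τ hτ
    rw [twoFaces, Finset.mem_filter] at hτ
    refine Finset.sum_nonneg fun ℓ _ => div_nonneg hβ1 ?_
    have hAτ : 0 < signedArea Q (Δ.orient τ) := hplus.2 τ hτ.1 hτ.2
    unfold height edgeLen
    exact div_nonneg (by linarith) (norm_nonneg _)
  have hT1 : (∑ ℓ : Fin 3, β1 / height Q o ℓ) ≤
      ∑ τ ∈ twoFaces Δ, ∑ ℓ : Fin 3, β1 / height Q (Δ.orient τ) ℓ := by
    have hσ' : σ ∈ twoFaces Δ := by rw [twoFaces, Finset.mem_filter]; exact ⟨hσ, hcard⟩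
    exact Finset.single_le_sum hsum_nonneg hσ'
  have hT1' : 0 ≤ ∑ τ ∈ twoFaces Δ, ∑ ℓ : Fin 3, β1 / height Q (Δ.orient τ) ℓ :=
    Finset.sum_nonneg hsum_nonneg
  have hT2 : 0 ≤ ∑ e ∈ boundaryEdges Δ,
      ∑ i ∈ (boundaryVertices Δ).filter (fun i => i ∉ e), β2 / Dedge Q i e := by
    refine Finset.sum_nonneg fun e _ => Finset.sum_nonneg fun i _ => div_nonneg hβ2 ?_
    refine Real.sInf_nonneg fun r hr => ?_
    obtain ⟨j0, _, j1, _, _, rfl⟩ := hr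
    refine Real.sInf_nonneg fun z hz => ?_
    obtain ⟨w, _, rfl⟩ := hz
    unfold rot1norm
    positivity
  have hT3 : 0 ≤ frobSq Q Qref := Finset.sum_nonneg fun i _ => by positivity
  have hfge : ∀ L : ℝ, 0 < L → 2 * β1 / L ≤ β1 * P / D → 2 * β1 / L ≤ f := by
    intro L hL h
    rw [hfdef]
    unfold ffun
    have h3 : 0 ≤ β3 / 2 * frobSq Q Qref := by positivity
    calc 2 * β1 / L ≤ β1 * P / D := h
      _ = ∑ ℓ : Fin 3, β1 / height Q o ℓ := hSσ.symm
      _ ≤ _ := by linarith [hT1]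
  have hf0 : 0 ≤ f := by
    rw [hfdef]; unfold ffun
    have h3 : 0 ≤ β3 / 2 * frobSq Q Qref := by positivity
    linarith
  have hF : frobSq Q Qref ≤ 2 * (f / β3) := by
    have hle : β3 / 2 * frobSq Q Qref ≤ f := by
      rw [hfdef]; unfold ffun; linarith
    rw [mul_div_assoc', le_div_iff₀ hβ3]
    nlinarith
  intro ℓ
  fin_cases ℓ
  · have e0 : edgeLen Q o 0 = ‖pb - pc‖ := rfl
    have hpos : 0 < ‖pb - pc‖ := key0.1
    have hlow := hfge _ hpos key0.2
    constructor
    · rw [show ((0 : Fin 3)) = 0 from rfl] at *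
      exact e0 ▸ lower_aux' hβ1 hpos hlow
    · refine e0 ▸ ?_
      rw [hpb, hpc]
      exact upper_main' Q Qref (o 1) (o 2) f β3 hβ3 hf0 (by rw [← hpb, ← hpc]; exact hpos) hF
  · have e1 : edgeLen Q o 1 = ‖pc - pa‖ := rfl
    have hpos : 0 < ‖pc - pa‖ := key1.1
    have hlow := hfge _ hpos k1le
    constructor
    · exact e1 ▸ lower_aux' hβ1 hpos hlow
    · refine e1 ▸ ?_
      rw [hpc, hpa]
      exact upper_main' Q Qref (o 2) (o 0) f β3 hβ3 hf0 (by rw [← hpc, ← hpa]; exact hpos) hF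
  · have e2 : edgeLen Q o 2 = ‖pa - pb‖ := rfl
    have hpos : 0 < ‖pa - pb‖ := key2.1
    have hlow := hfge _ hpos k2le
    constructor
    · exact e2 ▸ lower_aux' hβ1 hpos hlow
    · refine e2 ▸ ?_
      rw [hpa, hpb]
      exact upper_main' Q Qref (o 0) (o 1) f β3 hβ3 hf0 (by rw [← hpa, ← hpb]; exact hpos) hF


end PlanarMesh
end
end

section
/- Let [i_0,i_1,i_2] be an arbitrary oriented 2-face of Δ, suppose β₁, β₂ ≥ 0 and β₃ > 0, and let Q ∈ M_Δ(Q_ref). Then the signed area satisfies A_Q[i_0,i_1,i_2] ≥ π·β₁² / f(Q)². -/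
open scoped RealInnerProductSpace
open scoped Classical

noncomputable section

namespace PlanarMesh

variable {N : ℕ}

variable (Δ : OrientedComplex N)

lemma pt_norm_sq (x : Pt) : ‖x‖^2 = x 0^2 + x 1^2 := by
  rw [EuclideanSpace.norm_eq, Real.sq_sqrt (by positivity)]
  simp [Fin.sum_univ_two, sq_abs]

lemma amgm_aux (U V W : ℝ) (hUV : 0 ≤ U+V) (hVW : 0 ≤ V+W) (hUW : 0 ≤ U+W) :
    16*(U*V*W) ≤ (U+V+W)^3 := by
  rcases le_or_gt 0 U with hU|hU <;> rcases le_or_gt 0 V with hV|hV <;>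
    rcases le_or_gt 0 W with hW|hW
  · nlinarith [sq_nonneg (U-V), sq_nonneg (V-W), sq_nonneg (U-W), mul_nonneg hU hV,
      mul_nonneg hV hW, mul_nonneg hU hW]
  · have hp : (0:ℝ) ≤ U+V+W := by linarith
    nlinarith [mul_nonneg hU hV, pow_nonneg hp 3]
  · have hp : (0:ℝ) ≤ U+V+W := by linarith
    nlinarith [mul_nonneg hU hW, pow_nonneg hp 3]
  · linarith
  · have hp : (0:ℝ) ≤ U+V+W := by linarith
    nlinarith [mul_nonneg hV hW, pow_nonneg hp 3]
  · linarith
  · linarith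
  · linarith

lemma det2_bound (v w : Pt) : 8 * det2 v w ≤ (‖v‖ + ‖w‖ + ‖v + w‖)^2 := by
  set α := ‖v‖ with hαdef
  set β := ‖w‖ with hβdef
  set γ := ‖v + w‖ with hγdef
  have hα : 0 ≤ α := norm_nonneg _
  have hβ : 0 ≤ β := norm_nonneg _
  have hγ : 0 ≤ γ := norm_nonneg _
  have hα2 : α^2 = v 0^2 + v 1^2 := pt_norm_sq v
  have hβ2 : β^2 = w 0^2 + w 1^2 := pt_norm_sq w
  have hγ2 : γ^2 = (v 0 + w 0)^2 + (v 1 + w 1)^2 := by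
    rw [hγdef, pt_norm_sq]; simp
  have h4 : 4*(det2 v w)^2 = (α+β+γ)*((β+γ-α)*((α+γ-β)*(α+β-γ))) := by
    have expand : (α+β+γ)*((β+γ-α)*((α+γ-β)*(α+β-γ)))
        = 4*(α^2)*(β^2) - ((γ^2)-(α^2)-(β^2))^2 := by ring
    rw [expand, hα2, hβ2, hγ2]; simp only [det2]; ring
  rcases le_or_gt (det2 v w) 0 with hd|hd
  · nlinarith [sq_nonneg (α+β+γ)]
  · have hC := amgm_aux (β+γ-α) (α+γ-β) (α+β-γ) (by linarith) (by linarith) (by linarith)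
    have hp : 0 ≤ α+β+γ := by linarith
    nlinarith [h4, mul_le_mul_of_nonneg_left hC hp, hd, sq_nonneg (α+β+γ)]

/-- Lower bound on the (signed) area of any 2-face in terms of `f(Q)`. -/
theorem stmt8 {N : ℕ} (hN : 3 ≤ N) (Δ : OrientedComplex N)
    (Qref : Fin N → Pt) (href : Qref ∈ Mplus Δ)
    (β1 β2 β3 : ℝ) (hβ1 : 0 ≤ β1) (hβ2 : 0 ≤ β2) (hβ3 : 0 < β3)
    (Q : Fin N → Pt) (hQ : Q ∈ Mmesh Δ Qref)
    (σ : Finset (Fin N)) (hσ : σ ∈ Δ.faces) (hcard : σ.card = 3) :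
    Real.pi * β1 ^ 2 / ffun Δ Qref β1 β2 β3 Q ^ 2 ≤ signedArea Q (Δ.orient σ) := by
  -- `Q` lies in `M⁺`
  have hQplus : Q ∈ Mplus Δ := hQ.target_mem
  set o := Δ.orient σ with ho
  have hA : 0 < signedArea Q o := hQplus.2 σ hσ hcard
  set v : Pt := Q (o 1) - Q (o 0) with hv
  set w : Pt := Q (o 2) - Q (o 1) with hw
  have hAval : signedArea Q o = det2 v w / 2 := rfl
  -- the edge lengths
  have e0 : edgeLen Q o 0 = ‖w‖ := by
    unfold edgeLen
    rw [show ((0:Fin 3)+1) = 1 from rfl, show ((0:Fin 3)+2) = 2 from rfl, norm_sub_rev]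
  have e1 : edgeLen Q o 1 = ‖v + w‖ := by
    unfold edgeLen
    rw [show ((1:Fin 3)+1) = 2 from rfl, show ((1:Fin 3)+2) = 0 from rfl]
    congr 1
    rw [hv, hw]; abel
  have e2 : edgeLen Q o 2 = ‖v‖ := by
    unfold edgeLen
    rw [show ((2:Fin 3)+1) = 0 from rfl, show ((2:Fin 3)+2) = 1 from rfl, norm_sub_rev]
  -- one edge is positive
  have hwpos : 0 < ‖w‖ := by
    rcases (norm_nonneg w).lt_or_eq with h|h
    · exact h
    · exfalso
      have hw0 : w = 0 := norm_eq_zero.mp h.symm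
      have : det2 v w = 0 := by rw [hw0]; simp [det2]
      rw [hAval, this] at hA; norm_num at hA
  -- the semiperimeter
  set S : ℝ := (‖w‖ + ‖v + w‖ + ‖v‖) / 2 with hS
  have hSpos : 0 < S := by
    have := norm_nonneg v; have := norm_nonneg (v + w); rw [hS]; linarith
  -- isoperimetric-type bound : π A ≤ S²
  have hiso : Real.pi * signedArea Q o ≤ S^2 := by
    have h1 := det2_bound v w
    have h2 := Real.pi_le_four
    rw [hAval]
    nlinarith [hA, hAval]
  -- the sum over the heights of σ
  have hsum : ∑ ℓ : Fin 3, β1 / height Q o ℓ = β1 * S / signedArea Q o := by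
    rw [Fin.sum_univ_three]
    simp only [height, div_div_eq_mul_div, e0, e1, e2]
    field_simp
    ring
  -- nonnegativity of all the height terms
  have hTnn : ∀ τ ∈ twoFaces Δ, 0 ≤ ∑ ℓ : Fin 3, β1 / height Q (Δ.orient τ) ℓ := by
    intro τ hτ
    rw [twoFaces, Finset.mem_filter] at hτ
    have hAτ : 0 < signedArea Q (Δ.orient τ) := hQplus.2 τ hτ.1 hτ.2
    refine Finset.sum_nonneg fun ℓ _ => div_nonneg hβ1 ?_
    exact div_nonneg (by linarith) (norm_nonneg _)
  have hσ2 : σ ∈ twoFaces Δ := Finset.mem_filter.2 ⟨hσ, hcard⟩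
  have hT : ∑ ℓ : Fin 3, β1 / height Q o ℓ
      ≤ ∑ τ ∈ twoFaces Δ, ∑ ℓ : Fin 3, β1 / height Q (Δ.orient τ) ℓ :=
    Finset.single_le_sum hTnn hσ2
  -- nonnegativity of the boundary terms
  have hB : 0 ≤ ∑ e ∈ boundaryEdges Δ,
      ∑ i ∈ (boundaryVertices Δ).filter (fun i => i ∉ e), β2 / Dedge Q i e := by
    refine Finset.sum_nonneg fun e _ => Finset.sum_nonneg fun i _ => div_nonneg hβ2 ?_
    apply Real.sInf_nonneg
    rintro r ⟨j0, _, j1, _, _, rfl⟩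
    apply Real.sInf_nonneg
    rintro x ⟨y, _, rfl⟩
    unfold rot1norm
    positivity
  have hC : 0 ≤ β3 / 2 * frobSq Q Qref := by
    refine mul_nonneg (by linarith) (Finset.sum_nonneg fun i _ => by positivity)
  -- lower bound on f
  have hF : β1 * S / signedArea Q o ≤ ffun Δ Qref β1 β2 β3 Q := by
    rw [ffun, ← hsum]; linarith
  -- conclusion
  rcases eq_or_lt_of_le hβ1 with hb|hb
  · rw [← hb]; norm_num; positivity
  · have hFpos : 0 < ffun Δ Qref β1 β2 β3 Q :=
      lt_of_lt_of_le (by positivity) hF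
    rw [div_le_iff₀ (by positivity)]
    have hq : (β1 * S)^2 ≤ (ffun Δ Qref β1 β2 β3 Q * signedArea Q o)^2 := by
      have h1 : β1 * S ≤ ffun Δ Qref β1 β2 β3 Q * signedArea Q o := by
        rw [div_le_iff₀ hA] at hF; exact hF
      exact pow_le_pow_left₀ (by positivity) h1 2
    nlinarith [mul_le_mul_of_nonneg_left hiso (sq_nonneg β1), hq, hA,
      mul_pos hFpos hFpos]


end PlanarMesh
end
end

section
/- Let [i_0,i_1,i_2] be an arbitrary oriented 2-face of Δ, suppose β₁, β₂ ≥ 0 and β₃ > 0, and let Q ∈ M_Δ(Q_ref). Then the inradius and circumradius satisfy r_Q[i_0,i_1,i_2] / R_Q[i_0,i_1,i_2] ≥ 4π·β₁³ / ( (2·√(f(Q)/β₃) + √2·‖Q_ref‖_F)³ · f(Q)³ ). -/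
open scoped RealInnerProductSpace
open scoped Classical

noncomputable section

namespace PlanarMesh

variable {N : ℕ}

variable (Δ : OrientedComplex N)

private lemma norm_sq_coords (P1 P2 : Pt) :
    ‖P1 - P2‖^2 = (P1 0 - P2 0)^2 + (P1 1 - P2 1)^2 := by
  have : ‖P1 - P2‖ = Real.sqrt ((P1 0 - P2 0)^2 + (P1 1 - P2 1)^2) := by
    rw [EuclideanSpace.norm_eq]; congr 1; simp [Fin.sum_univ_two, sq_abs]
  rw [this, Real.sq_sqrt (by positivity)]

private lemma heron (P0 P1 P2 : Pt) :
    16 * (det2 (P1 - P0) (P2 - P1) / 2)^2 =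
    (‖P1-P2‖+‖P2-P0‖+‖P0-P1‖)*(‖P2-P0‖+‖P0-P1‖-‖P1-P2‖)*(‖P1-P2‖+‖P0-P1‖-‖P2-P0‖)*(‖P1-P2‖+‖P2-P0‖-‖P0-P1‖) := by
  have key : ∀ a b c : ℝ, (a+b+c)*(b+c-a)*(a+c-b)*(a+b-c) = 4*b^2*c^2 - (b^2+c^2-a^2)^2 := by
    intros; ring
  rw [key, norm_sq_coords P1 P2, norm_sq_coords P2 P0, norm_sq_coords P0 P1]
  simp only [det2, PiLp.sub_apply]
  ring

private lemma amgm3 (u v w : ℝ) (hu : 0 ≤ u) (hv : 0 ≤ v) (hw : 0 ≤ w) :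
    27*(u*v*w) ≤ (u+v+w)^3 := by
  nlinarith [mul_nonneg hu hv, mul_nonneg hv hw, mul_nonneg hu hw, sq_nonneg (u-v),
    sq_nonneg (v-w), sq_nonneg (u-w), mul_nonneg (mul_nonneg hu hv) hw,
    mul_nonneg hw (sq_nonneg (u-v)), mul_nonneg hu (sq_nonneg (v-w)),
    mul_nonneg hv (sq_nonneg (u-w))]

private lemma sum_sq_bound (x y M : ℝ) (hx : 0 ≤ x) (hy : 0 ≤ y) (hM : x^2 + y^2 ≤ M) :
    x + y ≤ Real.sqrt (2*M) := by
  have h1 : (x+y)^2 ≤ 2*M := by nlinarith [sq_nonneg (x-y)]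
  calc x + y = Real.sqrt ((x+y)^2) := (Real.sqrt_sq (by positivity)).symm
    _ ≤ Real.sqrt (2*M) := Real.sqrt_le_sqrt h1

private lemma edge_bound {n : ℕ} (Q R : Fin n → Pt) (i j : Fin n) (hij : i ≠ j)
    (F β3 : ℝ) (hβ3 : 0 < β3) (hF0 : 0 ≤ F) (hfrob : frobSq Q R ≤ 2*F/β3) :
    ‖Q i - Q j‖ ≤ 2 * Real.sqrt (F/β3) + Real.sqrt 2 * frobNorm R := by
  have hsum : ‖Q i - R i‖^2 + ‖Q j - R j‖^2 ≤ 2*F/β3 := by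
    have h := Finset.sum_le_sum_of_subset_of_nonneg
      (Finset.subset_univ ({i, j} : Finset (Fin n)))
      (fun k _ _ => sq_nonneg (‖Q k - R k‖))
    rw [Finset.sum_pair hij] at h
    exact le_trans h hfrob
  have hd := sum_sq_bound _ _ _ (norm_nonneg (Q i - R i)) (norm_nonneg (Q j - R j)) hsum
  have e1 : Real.sqrt (2*(2*F/β3)) = 2 * Real.sqrt (F/β3) := by
    rw [show (2:ℝ)*(2*F/β3) = 2^2*(F/β3) by ring,
      Real.sqrt_mul (by positivity), Real.sqrt_sq (by norm_num)]
  rw [e1] at hd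
  have hq2 : frobNorm R ^ 2 = ∑ k, ‖R k‖^2 :=
    Real.sq_sqrt (Finset.sum_nonneg fun k _ => sq_nonneg _)
  have hsum2 : ‖R i‖^2 + ‖R j‖^2 ≤ frobNorm R ^ 2 := by
    rw [hq2]
    have h := Finset.sum_le_sum_of_subset_of_nonneg
      (Finset.subset_univ ({i, j} : Finset (Fin n)))
      (fun k _ _ => sq_nonneg (‖R k‖))
    rwa [Finset.sum_pair hij] at h
  have hr := sum_sq_bound _ _ _ (norm_nonneg (R i)) (norm_nonneg (R j)) hsum2
  have hfn0 : 0 ≤ frobNorm R := Real.sqrt_nonneg _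
  have e2 : Real.sqrt (2 * frobNorm R ^ 2) = Real.sqrt 2 * frobNorm R := by
    rw [Real.sqrt_mul (by norm_num), Real.sqrt_sq hfn0]
  rw [e2] at hr
  have h0 : ‖R i - R j‖ ≤ ‖R i‖ + ‖R j‖ := norm_sub_le _ _
  have htri4 : ‖Q i - Q j‖ ≤ ‖Q i - R i‖ + ‖R i - R j‖ + ‖R j - Q j‖ := by
    simpa [dist_eq_norm] using dist_triangle4 (Q i) (R i) (R j) (Q j)
  rw [norm_sub_rev (R j) (Q j)] at htri4
  linarith

set_option maxHeartbeats 1000000 in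
private lemma final_arith (a b c A s F C β1 : ℝ)
    (hapos : 0 < a) (hbpos : 0 < b) (hcpos : 0 < c) (hApos : 0 < A)
    (hsdef : s = (a+b+c)/2)
    (hH : 16 * A^2 = (a+b+c)*(b+c-a)*(a+c-b)*(a+b-c))
    (htri1 : a ≤ b + c) (htri2 : b ≤ a + c) (htri3 : c ≤ a + b)
    (h1pos : 0 < β1) (hF0 : 0 ≤ F) (hfs : β1 * s / A ≤ F)
    (haC : a ≤ C) (hbC : b ≤ C) (hcC : c ≤ C) :
    4 * Real.pi * β1 ^ 3 / (C ^ 3 * F ^ 3) ≤ A / s / (a*b*c/(4*A)) := by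
  have hspos : 0 < s := by rw [hsdef]; linarith
  have habc0 : (0:ℝ) ≤ a+b+c := by linarith
  have hCpos : 0 < C := lt_of_lt_of_le hapos haC
  have habcpos : 0 < a*b*c := mul_pos (mul_pos hapos hbpos) hcpos
  have hFpos : 0 < F := lt_of_lt_of_le (div_pos (mul_pos h1pos hspos) hApos) hfs
  have h4A : 4 * A ≤ s^2 := by
    have hAM := amgm3 (b+c-a) (a+c-b) (a+b-c) (by linarith) (by linarith) (by linarith)
    have h16 : 27 * (16 * A^2) ≤ ((a+b+c)^2)^2 := by
      nlinarith [hH, mul_le_mul_of_nonneg_left hAM habc0]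
    rw [hsdef]
    nlinarith [h16, hApos, habc0]
  have hr_lb : β1 / F ≤ A / s := by
    rw [div_le_div_iff₀ hFpos hspos]
    have h := (div_le_iff₀ hApos).mp hfs
    nlinarith [h]
  have hr0 : 0 ≤ A / s := le_trans (div_nonneg h1pos.le hF0) hr_lb
  have hpi4 : Real.pi ≤ 4 := Real.pi_le_four
  have hpir2 : Real.pi * (A/s)^2 ≤ A := by
    rw [div_pow, ← mul_div_assoc, div_le_iff₀ (pow_pos hspos 2)]
    nlinarith [mul_le_mul_of_nonneg_right hpi4 (sq_nonneg A),
      mul_le_mul_of_nonneg_left h4A hApos.le]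
  have hPC : a * b * c ≤ C^3 := by
    have h1 : a*b ≤ C*C := mul_le_mul haC hbC hbpos.le hCpos.le
    have h2 := mul_le_mul h1 hcC hcpos.le (mul_nonneg hCpos.le hCpos.le)
    nlinarith [h2]
  have hrpow : (β1/F)^3 ≤ (A/s)^3 := pow_le_pow_left₀ (div_nonneg h1pos.le hF0) hr_lb 3
  calc 4 * Real.pi * β1 ^ 3 / (C ^ 3 * F ^ 3)
      = 4 * Real.pi * (β1/F)^3 / C^3 := by
        rw [div_pow]; field_simp
    _ ≤ 4 * Real.pi * (A/s)^3 / C^3 := by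
        rw [div_le_div_iff_of_pos_right (pow_pos hCpos 3)]
        nlinarith [hrpow, Real.pi_pos]
    _ ≤ 4 * Real.pi * (A/s)^3 / (a*b*c) := by
        rw [div_le_div_iff_of_pos_left (mul_pos (mul_pos (by norm_num) Real.pi_pos) (pow_pos (div_pos hApos hspos) 3)) (pow_pos hCpos 3) habcpos]
        exact hPC
    _ ≤ 4 * (A * (A/s)) / (a*b*c) := by
        rw [div_le_div_iff_of_pos_right habcpos]
        nlinarith [mul_le_mul_of_nonneg_right hpir2 hr0]
    _ = A / s / (a*b*c/(4*A)) := by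
        field_simp

set_option maxHeartbeats 1000000 in
/-- Lower bound on the ratio of inradius to circumradius of any 2-face in terms of `f(Q)`. -/
theorem stmt9 {N : ℕ} (hN : 3 ≤ N) (Δ : OrientedComplex N)
    (Qref : Fin N → Pt) (href : Qref ∈ Mplus Δ)
    (β1 β2 β3 : ℝ) (hβ1 : 0 ≤ β1) (hβ2 : 0 ≤ β2) (hβ3 : 0 < β3)
    (Q : Fin N → Pt) (hQ : Q ∈ Mmesh Δ Qref)
    (σ : Finset (Fin N)) (hσ : σ ∈ Δ.faces) (hcard : σ.card = 3) :
    4 * Real.pi * β1 ^ 3 /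
        ((2 * Real.sqrt (ffun Δ Qref β1 β2 β3 Q / β3) + Real.sqrt 2 * frobNorm Qref) ^ 3
          * ffun Δ Qref β1 β2 β3 Q ^ 3)
      ≤ inradius Q (Δ.orient σ) / circumradius Q (Δ.orient σ) := by
  classical
  have hQm : Q ∈ Mplus Δ := hQ.target_mem
  set o := Δ.orient σ with ho
  have hApos : 0 < signedArea Q o := hQm.2 σ hσ hcard
  -- injectivity of the orientation map
  have hoinj : Function.Injective o := by
    have h1 := Δ.orient_spec σ hσ hcard
    have h2 : (Finset.univ.image o).card = (Finset.univ : Finset (Fin 3)).card := by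
      rw [← ho] at h1; rw [h1, hcard]; rfl
    have h3 := Finset.card_image_iff.mp h2
    intro x y hxy
    exact h3 (Finset.mem_coe.mpr (Finset.mem_univ x)) (Finset.mem_coe.mpr (Finset.mem_univ y)) hxy
  set P0 := Q (o 0) with hP0
  set P1 := Q (o 1) with hP1
  set P2 := Q (o 2) with hP2
  set a := ‖P1 - P2‖ with hadef
  set b := ‖P2 - P0‖ with hbdef
  set c := ‖P0 - P1‖ with hcdef
  have hE0 : edgeLen Q o 0 = a := rfl
  have hE1 : edgeLen Q o 1 = b := rfl
  have hE2 : edgeLen Q o 2 = c := rfl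
  have hsA : signedArea Q o = det2 (P1 - P0) (P2 - P1) / 2 := rfl
  -- Heron's formula
  have hH : 16 * (signedArea Q o)^2 = (a+b+c)*(b+c-a)*(a+c-b)*(a+b-c) := by
    rw [hsA, hadef, hbdef, hcdef]; exact heron P0 P1 P2
  -- triangle inequalities
  have tri : ∀ X Y Z : Pt, ‖X - Z‖ ≤ ‖X - Y‖ + ‖Y - Z‖ := fun X Y Z => by
    simpa [dist_eq_norm] using dist_triangle X Y Z
  have htri1 : a ≤ b + c := by
    have h := tri P1 P0 P2
    rw [norm_sub_rev P1 P0, norm_sub_rev P0 P2] at h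
    rw [hadef, hbdef, hcdef]; linarith [h]
  have htri2 : b ≤ a + c := by
    have h := tri P2 P1 P0
    rw [norm_sub_rev P2 P1, norm_sub_rev P1 P0] at h
    rw [hadef, hbdef, hcdef]; linarith [h]
  have htri3 : c ≤ a + b := by
    have h := tri P0 P2 P1
    rw [norm_sub_rev P0 P2, norm_sub_rev P2 P1] at h
    rw [hadef, hbdef, hcdef]; linarith [h]
  have ha0 : 0 ≤ a := norm_nonneg _
  have hb0 : 0 ≤ b := norm_nonneg _
  have hc0 : 0 ≤ c := norm_nonneg _
  -- strict positivity of the edges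
  have hapos : 0 < a := by
    rcases eq_or_lt_of_le (norm_nonneg (P1 - P2)) with h | h
    · exfalso
      have h12 : P1 = P2 := by rw [← sub_eq_zero]; exact norm_eq_zero.mp h.symm
      rw [hsA, h12] at hApos
      simp only [det2, sub_self, PiLp.sub_apply, PiLp.zero_apply] at hApos
      linarith
    · exact h
  have hbpos : 0 < b := by
    rcases eq_or_lt_of_le (norm_nonneg (P2 - P0)) with h | h
    · exfalso
      have h20 : P2 = P0 := by rw [← sub_eq_zero]; exact norm_eq_zero.mp h.symm
      rw [hsA, h20] at hApos
      simp only [det2, sub_self, PiLp.sub_apply, PiLp.zero_apply] at hApos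
      linarith
    · exact h
  have hcpos : 0 < c := by
    rcases eq_or_lt_of_le (norm_nonneg (P0 - P1)) with h | h
    · exfalso
      have h01 : P0 = P1 := by rw [← sub_eq_zero]; exact norm_eq_zero.mp h.symm
      rw [hsA, h01] at hApos
      simp only [det2, sub_self, PiLp.sub_apply, PiLp.zero_apply] at hApos
      linarith
    · exact h
  -- the semiperimeter
  set s := (a+b+c)/2 with hsdef
  have hspos : 0 < s := by rw [hsdef]; linarith
  have hin : inradius Q o = signedArea Q o / s := by
    rw [inradius, semiPerimeter, hE0, hE1, hE2]
  have hcirc : circumradius Q o = a*b*c/(4*signedArea Q o) := by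
    rw [circumradius, hE0, hE1, hE2]
  -- 4 A ≤ s^2
  have habc0 : (0:ℝ) ≤ a+b+c := by linarith
  have h4A : 4 * signedArea Q o ≤ s^2 := by
    have hAM := amgm3 (b+c-a) (a+c-b) (a+b-c) (by linarith) (by linarith) (by linarith)
    have h16 : 27 * (16 * (signedArea Q o)^2) ≤ ((a+b+c)^2)^2 := by
      nlinarith [hH, mul_le_mul_of_nonneg_left hAM habc0]
    rw [hsdef]
    nlinarith [h16, hApos, habc0]
  -- nonnegativity of the pieces of f
  set F := ffun Δ Qref β1 β2 β3 Q with hFdef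
  have hterm_nonneg : ∀ σ' ∈ twoFaces Δ, 0 ≤ ∑ ℓ : Fin 3, β1 / height Q (Δ.orient σ') ℓ := by
    intro σ' hσ'
    obtain ⟨hf', hcard'⟩ := Finset.mem_filter.mp hσ'
    have hA' : 0 < signedArea Q (Δ.orient σ') := hQm.2 σ' hf' hcard'
    refine Finset.sum_nonneg fun ℓ _ => div_nonneg hβ1 ?_
    exact div_nonneg (by linarith) (norm_nonneg _)
  have hσ2 : σ ∈ twoFaces Δ := Finset.mem_filter.mpr ⟨hσ, hcard⟩
  have hS1 : (∑ ℓ : Fin 3, β1 / height Q o ℓ)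
      ≤ ∑ σ' ∈ twoFaces Δ, ∑ ℓ : Fin 3, β1 / height Q (Δ.orient σ') ℓ :=
    Finset.single_le_sum hterm_nonneg hσ2
  have hS1tot : 0 ≤ ∑ σ' ∈ twoFaces Δ, ∑ ℓ : Fin 3, β1 / height Q (Δ.orient σ') ℓ :=
    Finset.sum_nonneg hterm_nonneg
  have hS2 : 0 ≤ ∑ e ∈ boundaryEdges Δ,
      ∑ i ∈ (boundaryVertices Δ).filter (fun i => i ∉ e), β2 / Dedge Q i e := by
    refine Finset.sum_nonneg fun e _ => Finset.sum_nonneg fun i _ => div_nonneg hβ2 ?_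
    refine Real.sInf_nonneg ?_
    rintro x ⟨j0, hj0, j1, hj1, hne, rfl⟩
    refine Real.sInf_nonneg ?_
    rintro y ⟨z, hz, rfl⟩
    exact add_nonneg (abs_nonneg _) (abs_nonneg _)
  have hfrob0 : 0 ≤ frobSq Q Qref := Finset.sum_nonneg fun k _ => sq_nonneg _
  have hFparts : (∑ σ' ∈ twoFaces Δ, ∑ ℓ : Fin 3, β1 / height Q (Δ.orient σ') ℓ)
      + (∑ e ∈ boundaryEdges Δ,
          ∑ i ∈ (boundaryVertices Δ).filter (fun i => i ∉ e), β2 / Dedge Q i e)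
      + β3/2 * frobSq Q Qref = F := by rw [hFdef]; rfl
  have hfrobterm : 0 ≤ β3/2 * frobSq Q Qref := mul_nonneg (by linarith) hfrob0
  have hFS1 : (∑ ℓ : Fin 3, β1 / height Q o ℓ) ≤ F := by linarith
  have hFfrob : β3/2 * frobSq Q Qref ≤ F := by linarith
  have hF0 : 0 ≤ F := by linarith
  -- the sum of the three height terms
  have hsum3 : (∑ ℓ : Fin 3, β1 / height Q o ℓ) = β1 * s / signedArea Q o := by
    have h0 : β1 / height Q o 0 = β1 * a / (2 * signedArea Q o) := by
      rw [height, hE0, div_div_eq_mul_div]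
    have h1 : β1 / height Q o 1 = β1 * b / (2 * signedArea Q o) := by
      rw [height, hE1, div_div_eq_mul_div]
    have h2 : β1 / height Q o 2 = β1 * c / (2 * signedArea Q o) := by
      rw [height, hE2, div_div_eq_mul_div]
    rw [Fin.sum_univ_three, h0, h1, h2, hsdef]
    field_simp
  have hfs : β1 * s / signedArea Q o ≤ F := by rw [← hsum3]; exact hFS1
  -- bound on the edge lengths
  set C := 2 * Real.sqrt (F / β3) + Real.sqrt 2 * frobNorm Qref with hCdef
  have hfrob2 : frobSq Q Qref ≤ 2*F/β3 := by
    rw [le_div_iff₀ hβ3]; linarith [hFfrob]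
  have hCbound : ∀ i j : Fin N, i ≠ j → ‖Q i - Q j‖ ≤ C := fun i j hij => by
    rw [hCdef]; exact edge_bound Q Qref i j hij F β3 hβ3 hF0 hfrob2
  have ho12 : o 1 ≠ o 2 := fun h => by simpa using hoinj h
  have ho20 : o 2 ≠ o 0 := fun h => by simpa using hoinj h
  have ho01 : o 0 ≠ o 1 := fun h => by simpa using hoinj h
  have haC : a ≤ C := by rw [hadef, hP1, hP2]; exact hCbound (o 1) (o 2) ho12
  have hbC : b ≤ C := by rw [hbdef, hP2, hP0]; exact hCbound (o 2) (o 0) ho20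
  have hcC : c ≤ C := by rw [hcdef, hP0, hP1]; exact hCbound (o 0) (o 1) ho01
  have hCpos : 0 < C := lt_of_lt_of_le hapos haC
  -- rewrite the goal
  rw [hin, hcirc]
  have habcpos : (0:ℝ) < a*b*c := mul_pos (mul_pos hapos hbpos) hcpos
  rcases hβ1.eq_or_lt with h10 | h1pos
  · rw [← h10]
    have hz : (4 : ℝ) * Real.pi * 0 ^ 3 / (C ^ 3 * F ^ 3) = 0 := by norm_num
    rw [hz]
    have hrhs : 0 < signedArea Q o / s / (a*b*c/(4*signedArea Q o)) :=
      div_pos (div_pos hApos hspos) (div_pos habcpos (by linarith))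
    linarith
  -- main case : β1 > 0
  exact final_arith a b c (signedArea Q o) s F C β1 hapos hbpos hcpos hApos hsdef hH
    htri1 htri2 htri3 h1pos hF0 hfs haC hbC hcC

end PlanarMesh
end
end

section
/- Suppose Q ∈ M⁺_Δ, β₁, β₂, β₃ ≥ 0, and let i_0 be a vertex and [j_0,j_1] a 1-face of Δ such that {Q_{i_0}} ∩ conv{Q_{j_0},Q_{j_1}} = ∅. If i_0 is an interior vertex and [j_0,j_1] is an arbitrary (interior or boundary) 1-face, then D_Q(i_0,[j_0,j_1]) ≥ β₁ / f(Q). -/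
open scoped RealInnerProductSpace
open scoped Classical

noncomputable section

namespace PlanarMesh

variable {N : ℕ}

variable (Δ : OrientedComplex N)

/-! ### Auxiliary machinery -/

section AuxDet

lemma sub_apply_pt (v w : Pt) (i : Fin 2) : (v - w) i = v i - w i := rfl

lemma norm_sq_pt (v : Pt) : ‖v‖ ^ 2 = v 0 ^ 2 + v 1 ^ 2 := by
  rw [EuclideanSpace.norm_eq, Real.sq_sqrt (by positivity)]
  simp [Fin.sum_univ_two, Real.norm_eq_abs, sq_abs]

lemma det2_abs_le (v w : Pt) : |det2 v w| ≤ ‖v‖ * ‖w‖ := by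
  have h : (det2 v w) ^ 2 ≤ (‖v‖ * ‖w‖) ^ 2 := by
    have h1 := norm_sq_pt v; have h2 := norm_sq_pt w
    have h3 : (‖v‖ * ‖w‖) ^ 2 = (v 0 ^ 2 + v 1 ^ 2) * (w 0 ^ 2 + w 1 ^ 2) := by
      rw [mul_pow, h1, h2]
    rw [h3, det2]; nlinarith [sq_nonneg (v 0 * w 0 + v 1 * w 1)]
  calc |det2 v w| = Real.sqrt ((det2 v w) ^ 2) := (Real.sqrt_sq_eq_abs _).symm
    _ ≤ Real.sqrt ((‖v‖ * ‖w‖) ^ 2) := Real.sqrt_le_sqrt h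
    _ = ‖v‖ * ‖w‖ := Real.sqrt_sq (by positivity)

lemma det2_continuous_left (w : Pt) : Continuous fun v : Pt => det2 v w := by
  unfold det2; fun_prop

lemma det2_continuous_right (v : Pt) : Continuous fun w : Pt => det2 v w := by
  unfold det2; fun_prop

lemma det2_swap (v w : Pt) : det2 v w = -det2 w v := by simp [det2]; ring

lemma det2_cramer (a b u z : Pt) :
    det2 z u * det2 a b = det2 z a * det2 u b + det2 z b * det2 a u := by
  simp only [det2]; ring

lemma det2_cramer' (a b u c : Pt) :
    det2 u c * det2 a b = det2 a c * det2 u b + det2 b c * det2 a u := by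
  simp only [det2]; ring

lemma det2_zero_of (a b u : Pt) (hab : det2 a b ≠ 0) (h1 : det2 a u = 0)
    (h2 : det2 u b = 0) : u = 0 := by
  have h0 : u 0 * det2 a b = 0 := by
    simp only [det2] at *; linear_combination a 0 * h2 + b 0 * h1
  have h1' : u 1 * det2 a b = 0 := by
    simp only [det2] at *; linear_combination a 1 * h2 + b 1 * h1
  ext i
  fin_cases i
  · simpa [hab] using mul_eq_zero.mp h0
  · simpa [hab] using mul_eq_zero.mp h1'

lemma rank_pt : 1 < Module.rank ℝ Pt := by
  have h : Module.finrank ℝ Pt = 2 := finrank_euclideanSpace_fin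
  have h2 := Module.finrank_eq_rank ℝ Pt
  rw [h] at h2
  rw [← h2]; norm_num

lemma cone_cover (T : Finset (Pt × Pt))
    (hT : T.Nonempty)
    (hpos : ∀ p ∈ T, 0 < det2 p.1 p.2)
    (hsucc : ∀ p ∈ T, ∃ q ∈ T, q.1 = p.2)
    (hpred : ∀ p ∈ T, ∃ q ∈ T, q.2 = p.1)
    (u : Pt) : ∃ p ∈ T, 0 ≤ det2 u p.2 ∧ 0 ≤ det2 p.1 u := by
  rcases eq_or_ne u 0 with rfl | hu
  · obtain ⟨p, hp⟩ := hT
    exact ⟨p, hp, by simp [det2], by simp [det2]⟩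
  set A : Set Pt := ⋃ p ∈ (T : Set (Pt × Pt)), {w | 0 ≤ det2 w p.2 ∧ 0 ≤ det2 p.1 w} with hAdef
  have hmemA : ∀ w, w ∈ A ↔ ∃ p ∈ T, 0 ≤ det2 w p.2 ∧ 0 ≤ det2 p.1 w := by
    intro w
    simp only [hAdef, Set.mem_iUnion, Set.mem_setOf_eq, Finset.mem_coe, exists_prop]
  suffices hA : u ∈ A by exact (hmemA u).mp hA
  have hclosed : IsClosed A := by
    apply Set.Finite.isClosed_biUnion (T.finite_toSet)
    intro p _
    exact (isClosed_le continuous_const (det2_continuous_left p.2)).inter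
      (isClosed_le continuous_const (det2_continuous_right p.1))
  have hopen : ∀ w ∈ A, w ≠ 0 → w ∈ interior A := by
    intro w hw hw0
    obtain ⟨p, hpT, h1, h2⟩ := (hmemA w).mp hw
    obtain ⟨a, b⟩ := p
    simp only at h1 h2
    have hD : 0 < det2 a b := hpos _ hpT
    rcases h2.lt_or_eq with h2' | h2'
    · rcases h1.lt_or_eq with h1' | h1'
      · apply mem_interior.mpr
        refine ⟨{x | 0 < det2 x b} ∩ {x | 0 < det2 a x}, ?_, ?_, ⟨h1', h2'⟩⟩
        · rintro x ⟨hx1, hx2⟩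
          exact (hmemA x).mpr ⟨(a, b), hpT, le_of_lt hx1, le_of_lt hx2⟩
        · exact ((isOpen_lt continuous_const (det2_continuous_left b)).inter
            (isOpen_lt continuous_const (det2_continuous_right a)))
      · obtain ⟨q, hqT, hq1⟩ := hsucc (a, b) hpT
        have hbc : 0 < det2 b q.2 := by have := hpos _ hqT; rwa [hq1] at this
        have hwc : 0 < det2 w q.2 := by
          have := det2_cramer' a b w q.2
          rw [← h1'] at this
          nlinarith
        apply mem_interior.mpr
        refine ⟨{x | 0 < det2 a x} ∩ {x | 0 < det2 x q.2}, ?_, ?_, ⟨h2', hwc⟩⟩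
        · rintro x ⟨hx1, hx2⟩
          rcases le_or_gt 0 (det2 x b) with hxb | hxb
          · exact (hmemA x).mpr ⟨(a, b), hpT, hxb, le_of_lt hx1⟩
          · refine (hmemA x).mpr ⟨q, hqT, le_of_lt hx2, ?_⟩
            rw [hq1, det2_swap b x]; linarith [det2_swap x b]
        · exact ((isOpen_lt continuous_const (det2_continuous_right a)).inter
            (isOpen_lt continuous_const (det2_continuous_left q.2)))
    · obtain ⟨q, hqT, hq2⟩ := hpred (a, b) hpT
      have hza : 0 < det2 q.1 a := by have := hpos _ hqT; rwa [hq2] at this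
      have h1'' : 0 < det2 w b := by
        rcases h1.lt_or_eq with h | h
        · exact h
        · exact absurd (det2_zero_of a b w hD.ne' h2'.symm h.symm) hw0
      have hzw : 0 < det2 q.1 w := by
        have := det2_cramer a b w q.1
        rw [← h2'] at this
        nlinarith
      apply mem_interior.mpr
      refine ⟨{x | 0 < det2 x b} ∩ {x | 0 < det2 q.1 x}, ?_, ?_, ⟨h1'', hzw⟩⟩
      · rintro x ⟨hx1, hx2⟩
        rcases le_or_gt 0 (det2 a x) with hax | hax
        · exact (hmemA x).mpr ⟨(a, b), hpT, le_of_lt hx1, hax⟩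
        · refine (hmemA x).mpr ⟨q, hqT, ?_, le_of_lt hx2⟩
          rw [hq2, det2_swap x a]; linarith [det2_swap a x]
      · exact ((isOpen_lt continuous_const (det2_continuous_left b)).inter
          (isOpen_lt continuous_const (det2_continuous_right q.1)))
  have hs : IsPreconnected ({(0 : Pt)}ᶜ : Set Pt) :=
    (isConnected_compl_singleton_of_one_lt_rank rank_pt 0).isPreconnected
  by_contra hA
  have hne1 : (({(0 : Pt)}ᶜ : Set Pt) ∩ interior A).Nonempty := by
    obtain ⟨p, hpT⟩ := hT
    have ha0 : p.1 ≠ 0 := by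
      intro h
      have h4 := hpos p hpT
      rw [h] at h4; simp [det2] at h4
    have haA : p.1 ∈ A :=
      (hmemA p.1).mpr ⟨p, hpT, le_of_lt (hpos p hpT), le_of_eq (det2_self p.1).symm⟩
    exact ⟨p.1, ha0, hopen p.1 haA ha0⟩
  have hne2 : (({(0 : Pt)}ᶜ : Set Pt) ∩ Aᶜ).Nonempty := ⟨u, hu, fun h => hA h⟩
  have hsub : ({(0 : Pt)}ᶜ : Set Pt) ⊆ interior A ∪ Aᶜ := by
    intro x hx
    by_cases hxA : x ∈ A
    · exact Or.inl (hopen x hxA hx)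
    · exact Or.inr hxA
  obtain ⟨x, _, hx1, hx2⟩ := hs (interior A) Aᶜ isOpen_interior hclosed.isOpen_compl hsub hne1 hne2
  exact hx2 (interior_subset hx1)

end AuxDet

section AuxStar

lemma mem_inducedEdges (o : Fin 3 → Fin N) (ℓ : Fin 3) : (o ℓ, o (ℓ+1)) ∈ inducedEdges o := by
  fin_cases ℓ <;> simp [inducedEdges, show (0:Fin 3)+1 = 1 from rfl,
    show (1:Fin 3)+1 = 2 from rfl, show (2:Fin 3)+1 = 0 from rfl]

lemma inducedEdges_cases (o : Fin 3 → Fin N) {p q : Fin N} (h : (p, q) ∈ inducedEdges o) :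
    ∃ k : Fin 3, o k = p ∧ o (k+1) = q := by
  simp only [inducedEdges, Finset.mem_insert, Finset.mem_singleton, Prod.mk.injEq] at h
  rcases h with ⟨h1, h2⟩ | ⟨h1, h2⟩ | ⟨h1, h2⟩
  · exact ⟨1, h1.symm, by rw [show (1:Fin 3)+1 = 2 from rfl]; exact h2.symm⟩
  · exact ⟨2, h1.symm, by rw [show (2:Fin 3)+1 = 0 from rfl]; exact h2.symm⟩
  · exact ⟨0, h1.symm, by rw [show (0:Fin 3)+1 = 1 from rfl]; exact h2.symm⟩

lemma orient_injective (Δ : OrientedComplex N) {σ : Finset (Fin N)}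
    (hσ : σ ∈ Δ.faces) (h3 : σ.card = 3) : Function.Injective (Δ.orient σ) := by
  have himg := Δ.orient_spec σ hσ h3
  have hcard : (Finset.univ.image (Δ.orient σ)).card = (Finset.univ : Finset (Fin 3)).card := by
    rw [himg, h3]; simp
  have hinj := Finset.card_image_iff.mp hcard
  intro x y hxy
  exact hinj (Finset.mem_coe.mpr (Finset.mem_univ x)) (Finset.mem_coe.mpr (Finset.mem_univ y)) hxy

lemma orient_mem (Δ : OrientedComplex N) {σ : Finset (Fin N)}
    (hσ : σ ∈ Δ.faces) (h3 : σ.card = 3) (m : Fin 3) : Δ.orient σ m ∈ σ := by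
  have h := Finset.mem_image_of_mem (Δ.orient σ) (Finset.mem_univ m)
  rwa [Δ.orient_spec σ hσ h3] at h

/-- The index of `i0` in the orientation of `σ`. -/
def idxAt (Δ : OrientedComplex N) (i0 : Fin N) (σ : Finset (Fin N)) : Fin 3 :=
  if h : ∃ ℓ : Fin 3, Δ.orient σ ℓ = i0 then h.choose else 0

lemma idxAt_eq (Δ : OrientedComplex N) (i0 : Fin N) {σ : Finset (Fin N)}
    (hσ : σ ∈ Δ.faces) (h3 : σ.card = 3) (hi : i0 ∈ σ) :
    Δ.orient σ (idxAt Δ i0 σ) = i0 := by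
  have h : ∃ ℓ : Fin 3, Δ.orient σ ℓ = i0 := by
    rw [← Δ.orient_spec σ hσ h3] at hi
    obtain ⟨ℓ, _, hℓ⟩ := Finset.mem_image.mp hi
    exact ⟨ℓ, hℓ⟩
  rw [idxAt, dif_pos h]
  exact h.choose_spec

lemma idxAt_unique (Δ : OrientedComplex N) (i0 : Fin N) {σ : Finset (Fin N)}
    (hσ : σ ∈ Δ.faces) (h3 : σ.card = 3) {k : Fin 3} (hk : Δ.orient σ k = i0) :
    idxAt Δ i0 σ = k := by
  have hi : i0 ∈ σ := hk ▸ orient_mem Δ hσ h3 k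
  exact orient_injective Δ hσ h3 (by rw [idxAt_eq Δ i0 hσ h3 hi, hk])

/-- The pair of edge vectors of the triangle `σ` at the vertex `i0`. -/
def pairFor (Δ : OrientedComplex N) (Q : Fin N → Pt) (i0 : Fin N) (σ : Finset (Fin N)) :
    Pt × Pt :=
  (Q (Δ.orient σ (idxAt Δ i0 σ + 1)) - Q i0, Q (Δ.orient σ (idxAt Δ i0 σ + 2)) - Q i0)

lemma signedArea_shift (Q : Fin N → Pt) (o : Fin 3 → Fin N) (ℓ : Fin 3) :
    det2 (Q (o (ℓ+1)) - Q (o ℓ)) (Q (o (ℓ+2)) - Q (o (ℓ+1))) = 2 * signedArea Q o := by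
  fin_cases ℓ <;>
    · simp only [signedArea, det2, sub_apply_pt, Fin.isValue,
        show ((⟨0, by omega⟩ : Fin 3)) = 0 from rfl, show ((⟨1, by omega⟩ : Fin 3)) = 1 from rfl,
        show ((⟨2, by omega⟩ : Fin 3)) = 2 from rfl, Fin.reduceAdd]
      ring

lemma pairFor_det (Δ : OrientedComplex N) (Q : Fin N → Pt) (i0 : Fin N) {σ : Finset (Fin N)}
    (hσ : σ ∈ Δ.faces) (h3 : σ.card = 3) (hi : i0 ∈ σ) :
    det2 (pairFor Δ Q i0 σ).1 (pairFor Δ Q i0 σ).2 = 2 * signedArea Q (Δ.orient σ) := by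
  set ℓ := idxAt Δ i0 σ with hℓ
  have h0 : Δ.orient σ ℓ = i0 := idxAt_eq Δ i0 hσ h3 hi
  have key : ∀ x y z : Pt, det2 (y - x) (z - x) = det2 (y - x) (z - y) := by
    intro x y z; simp only [det2, sub_apply_pt]; ring
  have hp : pairFor Δ Q i0 σ
      = (Q (Δ.orient σ (ℓ+1)) - Q (Δ.orient σ ℓ), Q (Δ.orient σ (ℓ+2)) - Q (Δ.orient σ ℓ)) := by
    simp only [pairFor, ← hℓ, h0]
  rw [hp]
  simp only
  rw [key]
  exact signedArea_shift Q (Δ.orient σ) ℓ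

lemma otherTriangle (Δ : OrientedComplex N) (i0 : Fin N)
    (hiv : ∀ e ∈ Δ.faces, e.card = 2 → i0 ∈ e → IsInteriorEdge Δ e)
    {σ : Finset (Fin N)} (hσ : σ ∈ Δ.faces) (h3 : σ.card = 3) (hi : i0 ∈ σ)
    {v : Fin N} (hv : v ∈ σ) (hvi : v ≠ i0) :
    ∃ τ ∈ Δ.faces, τ.card = 3 ∧ i0 ∈ τ ∧ v ∈ τ ∧ τ ≠ σ ∧
      ∀ a b : Fin N, a ∈ σ → a ∈ τ → b ∈ σ → b ∈ τ → a ≠ b →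
        ((a, b) ∈ inducedEdges (Δ.orient σ) ↔ (b, a) ∈ inducedEdges (Δ.orient τ)) := by
  classical
  set e : Finset (Fin N) := {i0, v} with hedef
  have he_sub : e ⊆ σ := by
    intro x hx
    rcases Finset.mem_insert.mp hx with h | h
    · rwa [h]
    · rw [Finset.mem_singleton.mp h]; exact hv
  have hef : e ∈ Δ.faces :=
    Δ.down_closed σ hσ e he_sub ⟨i0, Finset.mem_insert_self _ _⟩
  have he2 : e.card = 2 := by
    rw [hedef, Finset.card_insert_of_notMem (Finset.notMem_singleton.mpr (Ne.symm hvi)),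
      Finset.card_singleton]
  obtain ⟨_, _, hcard2⟩ := hiv e hef he2 (Finset.mem_insert_self _ _)
  have hσs : σ ∈ Δ.faces.filter fun σ' => σ'.card = 3 ∧ e ⊆ σ' :=
    Finset.mem_filter.mpr ⟨hσ, h3, he_sub⟩
  obtain ⟨x, y, hxy, hsxy⟩ := Finset.card_eq_two.mp hcard2
  have hτex : ∃ τ, τ ∈ Δ.faces.filter (fun σ' => σ'.card = 3 ∧ e ⊆ σ') ∧ τ ≠ σ := by
    rcases (by rw [hsxy] at hσs; simpa using hσs : σ = x ∨ σ = y) with rfl | rfl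
    · exact ⟨y, by rw [hsxy]; simp, Ne.symm hxy⟩
    · exact ⟨x, by rw [hsxy]; simp, hxy⟩
  obtain ⟨τ, hτs, hτσ⟩ := hτex
  obtain ⟨hτf, hτ3, hτe⟩ := Finset.mem_filter.mp hτs
  have hτi : i0 ∈ τ := hτe (Finset.mem_insert_self _ _)
  have hτv : v ∈ τ := hτe (by rw [hedef]; simp)
  have hint : (σ ∩ τ).card = 2 := by
    have hsub2 : e ⊆ σ ∩ τ := fun x hx => Finset.mem_inter.mpr ⟨he_sub hx, hτe hx⟩
    have hge : 2 ≤ (σ ∩ τ).card := he2 ▸ Finset.card_le_card hsub2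
    have hle : (σ ∩ τ).card ≤ 3 := h3 ▸ Finset.card_le_card Finset.inter_subset_left
    by_contra hne2
    have h33 : (σ ∩ τ).card = 3 := by omega
    have hστ : σ ∩ τ = σ :=
      Finset.eq_of_subset_of_card_le Finset.inter_subset_left (by omega)
    have hsubτ : σ ⊆ τ := hστ ▸ Finset.inter_subset_right
    exact hτσ (Finset.eq_of_subset_of_card_le hsubτ (by omega)).symm
  refine ⟨τ, hτf, hτ3, hτi, hτv, hτσ, fun a b ha1 ha2 hb1 hb2 hab => ?_⟩
  exact Δ.consistent σ hσ τ hτf h3 hτ3 (Ne.symm hτσ) hint a b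
    (Finset.mem_inter.mpr ⟨ha1, ha2⟩) (Finset.mem_inter.mpr ⟨hb1, hb2⟩) hab

lemma star_succ (Δ : OrientedComplex N) (Q : Fin N → Pt) (i0 : Fin N)
    (hiv : ∀ e ∈ Δ.faces, e.card = 2 → i0 ∈ e → IsInteriorEdge Δ e)
    {σ : Finset (Fin N)} (hσ : σ ∈ Δ.faces) (h3 : σ.card = 3) (hi : i0 ∈ σ) :
    ∃ τ ∈ Δ.faces, τ.card = 3 ∧ i0 ∈ τ ∧ (pairFor Δ Q i0 τ).1 = (pairFor Δ Q i0 σ).2 := by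
  have h0 : Δ.orient σ (idxAt Δ i0 σ) = i0 := idxAt_eq Δ i0 hσ h3 hi
  set ℓ := idxAt Δ i0 σ with hℓ
  set bv := Δ.orient σ (ℓ+2) with hbv
  have hbσ : bv ∈ σ := orient_mem Δ hσ h3 _
  have hbi : bv ≠ i0 := by
    rw [← h0, hbv]
    intro h
    have h5 := orient_injective Δ hσ h3 h
    have harith2 : ∀ m : Fin 3, m + 2 ≠ m := by decide
    exact harith2 ℓ h5
  obtain ⟨τ, hτf, hτ3, hτi, hτv, hτσ, hcons⟩ := otherTriangle Δ i0 hiv hσ h3 hi hbσ hbi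
  have harith : ℓ + 2 + 1 = ℓ := by
    rw [add_assoc, show (2:Fin 3)+1 = 0 from rfl, add_zero]
  have hmem : (bv, i0) ∈ inducedEdges (Δ.orient σ) := by
    have h6 := mem_inducedEdges (Δ.orient σ) (ℓ+2)
    rwa [harith, h0] at h6
  have hmem2 : (i0, bv) ∈ inducedEdges (Δ.orient τ) :=
    (hcons bv i0 hbσ hτv (h0 ▸ orient_mem Δ hσ h3 ℓ) hτi hbi).mp hmem
  obtain ⟨k, hk1, hk2⟩ := inducedEdges_cases _ hmem2
  have hkτ : idxAt Δ i0 τ = k := idxAt_unique Δ i0 hτf hτ3 hk1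
  refine ⟨τ, hτf, hτ3, hτi, ?_⟩
  show Q (Δ.orient τ (idxAt Δ i0 τ + 1)) - Q i0 = Q (Δ.orient σ (ℓ+2)) - Q i0
  rw [hkτ, hk2]

lemma star_pred (Δ : OrientedComplex N) (Q : Fin N → Pt) (i0 : Fin N)
    (hiv : ∀ e ∈ Δ.faces, e.card = 2 → i0 ∈ e → IsInteriorEdge Δ e)
    {σ : Finset (Fin N)} (hσ : σ ∈ Δ.faces) (h3 : σ.card = 3) (hi : i0 ∈ σ) :
    ∃ τ ∈ Δ.faces, τ.card = 3 ∧ i0 ∈ τ ∧ (pairFor Δ Q i0 τ).2 = (pairFor Δ Q i0 σ).1 := by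
  have h0 : Δ.orient σ (idxAt Δ i0 σ) = i0 := idxAt_eq Δ i0 hσ h3 hi
  set ℓ := idxAt Δ i0 σ with hℓ
  set av := Δ.orient σ (ℓ+1) with hav
  have haσ : av ∈ σ := orient_mem Δ hσ h3 _
  have hai : av ≠ i0 := by
    rw [← h0, hav]
    intro h
    have h5 := orient_injective Δ hσ h3 h
    have harith2 : ∀ m : Fin 3, m + 1 ≠ m := by decide
    exact harith2 ℓ h5
  obtain ⟨τ, hτf, hτ3, hτi, hτv, hτσ, hcons⟩ := otherTriangle Δ i0 hiv hσ h3 hi haσ hai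
  have hmem : (i0, av) ∈ inducedEdges (Δ.orient σ) := by
    have h6 := mem_inducedEdges (Δ.orient σ) ℓ
    rwa [h0] at h6
  have hmem2 : (av, i0) ∈ inducedEdges (Δ.orient τ) :=
    (hcons i0 av (h0 ▸ orient_mem Δ hσ h3 ℓ) hτi haσ hτv (Ne.symm hai)).mp hmem
  obtain ⟨k, hk1, hk2⟩ := inducedEdges_cases _ hmem2
  have hkτ : idxAt Δ i0 τ = k + 1 := idxAt_unique Δ i0 hτf hτ3 hk2
  have harith : k + 1 + 2 = k := by
    rw [add_assoc, show (1:Fin 3)+2 = 0 from rfl, add_zero]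
  refine ⟨τ, hτf, hτ3, hτi, ?_⟩
  show Q (Δ.orient τ (idxAt Δ i0 τ + 2)) - Q i0 = Q (Δ.orient σ (ℓ+1)) - Q i0
  rw [hkτ, harith, hk1]

end AuxStar
section AuxGeo

lemma smul_apply_pt (c : ℝ) (v : Pt) (i : Fin 2) : (c • v) i = c * v i := rfl
lemma add_apply_pt (v w : Pt) (i : Fin 2) : (v + w) i = v i + w i := rfl

lemma mem_triangle_of_cone (q0 qa qb x : Pt)
    (hD : 0 < det2 (qa - q0) (qb - q0))
    (h1 : 0 ≤ det2 (x - q0) (qb - q0))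
    (h2 : 0 ≤ det2 (qa - q0) (x - q0))
    (hn : ‖x - q0‖ * ‖qa - qb‖ < det2 (qa - q0) (qb - q0)) :
    x ∈ convexHull ℝ ({q0, qa, qb} : Set Pt) := by
  set a := qa - q0 with ha
  set b := qb - q0 with hb
  set u := x - q0 with hu
  have hD' : det2 a b ≠ 0 := ne_of_gt hD
  set s := det2 u b / det2 a b with hs
  set t := det2 a u / det2 a b with ht
  have hs0 : 0 ≤ s := div_nonneg h1 hD.le
  have ht0 : 0 ≤ t := div_nonneg h2 hD.le
  have hdecomp : u = s • a + t • b := by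
    ext i
    simp only [smul_apply_pt, add_apply_pt, Fin.zero_eta, Fin.mk_one]
    fin_cases i <;>
    · simp only [Fin.zero_eta, Fin.mk_one, Fin.isValue]
      rw [hs, ht]
      field_simp
      simp only [det2]
      ring
  have hst : s + t < 1 := by
    have hid : det2 u b + det2 a u = det2 u (b - a) := by
      simp only [det2, sub_apply_pt]; ring
    have habs : det2 u (b - a) ≤ ‖u‖ * ‖b - a‖ :=
      le_trans (le_abs_self _) (det2_abs_le _ _)
    have hba : b - a = qb - qa := by rw [ha, hb]; abel
    have hnorm : ‖b - a‖ = ‖qa - qb‖ := by rw [hba, norm_sub_rev]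
    have hsum : (s + t) * det2 a b = det2 u b + det2 a u := by
      rw [hs, ht]; field_simp
    have hlt : (s + t) * det2 a b < det2 a b := by
      rw [hsum, hid]
      calc det2 u (b - a) ≤ ‖u‖ * ‖b - a‖ := habs
        _ = ‖u‖ * ‖qa - qb‖ := by rw [hnorm]
        _ < det2 a b := hn
    nlinarith [hlt, hD]
  have hx : x = (1 - s - t) • q0 + s • qa + t • qb := by
    have hx0 : x = q0 + u := by rw [hu]; abel
    rw [hx0, hdecomp, ha, hb]
    module
  rw [hx]
  rcases eq_or_lt_of_le (add_nonneg hs0 ht0) with h0 | hpos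
  · have hs' : s = 0 := by linarith
    have ht' : t = 0 := by linarith
    simp only [hs', ht', zero_smul, add_zero, sub_zero, one_smul]
    exact subset_convexHull ℝ _ (by simp)
  · set p := s + t with hp
    have hp0 : p ≠ 0 := ne_of_gt hpos
    have hmem : (s / p) • qa + (t / p) • qb ∈ convexHull ℝ ({q0, qa, qb} : Set Pt) :=
      (convex_convexHull ℝ _) (subset_convexHull ℝ _ (by simp)) (subset_convexHull ℝ _ (by simp))
        (div_nonneg hs0 hpos.le) (div_nonneg ht0 hpos.le) (by field_simp; exact hp.symm)
    have hfin := (convex_convexHull ℝ ({q0, qa, qb} : Set Pt))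
      (subset_convexHull ℝ _ (by simp : q0 ∈ ({q0, qa, qb} : Set Pt))) hmem
      (by linarith : (0:ℝ) ≤ 1 - p) hpos.le (by ring)
    have e1 : p * (s / p) = s := by field_simp
    have e2 : p * (t / p) = t := by field_simp
    rw [smul_add, smul_smul, smul_smul, e1, e2] at hfin
    have e3 : (1 - s - t) • q0 + s • qa + t • qb = (1 - p) • q0 + (s • qa + t • qb) := by
      rw [hp]; module
    rw [e3]
    exact hfin

lemma seg_dist_ge (q0 qa qb x : Pt) (hx : x ∈ segment ℝ qa qb) (hne : qa ≠ qb) :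
    det2 (qa - q0) (qb - q0) / ‖qa - qb‖ ≤ ‖x - q0‖ := by
  obtain ⟨c, d, hc, hd, hcd, rfl⟩ := hx
  have hd' : d = 1 - c := by linarith
  subst hd'
  have hdet : det2 (c • qa + (1 - c) • qb - q0) (qb - qa) = det2 (qa - q0) (qb - q0) := by
    simp only [det2, sub_apply_pt, add_apply_pt, smul_apply_pt]
    ring
  have habs : det2 (c • qa + (1 - c) • qb - q0) (qb - qa)
      ≤ ‖c • qa + (1 - c) • qb - q0‖ * ‖qb - qa‖ :=
    le_trans (le_abs_self _) (det2_abs_le _ _)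
  have hpos : 0 < ‖qa - qb‖ := by
    rw [norm_pos_iff]; exact sub_ne_zero.mpr hne
  rw [div_le_iff₀ hpos]
  rw [hdet] at habs
  calc det2 (qa - q0) (qb - q0) ≤ ‖c • qa + (1 - c) • qb - q0‖ * ‖qb - qa‖ := habs
    _ = ‖c • qa + (1 - c) • qb - q0‖ * ‖qa - qb‖ := by rw [norm_sub_rev qb qa]

lemma rot1norm_nonneg (u w : Pt) : 0 ≤ rot1norm u w := add_nonneg (abs_nonneg _) (abs_nonneg _)

lemma rot1norm_ge (u w : Pt) (hu : ‖u‖ = 1) : ‖w‖ ≤ rot1norm u w := by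
  have h1 : (w 0 * u 0 + w 1 * u 1) ^ 2 + (w 1 * u 0 - w 0 * u 1) ^ 2 = ‖w‖ ^ 2 * ‖u‖ ^ 2 := by
    rw [norm_sq_pt, norm_sq_pt]; ring
  rw [hu, one_pow, mul_one] at h1
  have h2 : ‖w‖ ^ 2 ≤ (|w 0 * u 0 + w 1 * u 1| + |w 1 * u 0 - w 0 * u 1|) ^ 2 := by
    rw [← h1]
    nlinarith [sq_abs (w 0 * u 0 + w 1 * u 1), sq_abs (w 1 * u 0 - w 0 * u 1),
      mul_nonneg (abs_nonneg (w 0 * u 0 + w 1 * u 1)) (abs_nonneg (w 1 * u 0 - w 0 * u 1))]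
  have h3 : 0 ≤ |w 0 * u 0 + w 1 * u 1| + |w 1 * u 0 - w 0 * u 1| :=
    add_nonneg (abs_nonneg _) (abs_nonneg _)
  calc ‖w‖ = Real.sqrt (‖w‖ ^ 2) := (Real.sqrt_sq (norm_nonneg _)).symm
    _ ≤ Real.sqrt ((|w 0 * u 0 + w 1 * u 1| + |w 1 * u 0 - w 0 * u 1|) ^ 2) := Real.sqrt_le_sqrt h2
    _ = |w 0 * u 0 + w 1 * u 1| + |w 1 * u 0 - w 0 * u 1| := Real.sqrt_sq h3
    _ = rot1norm u w := by rw [rot1norm]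

lemma norm_unitDir (a b : Pt) (h : a ≠ b) : ‖unitDir a b‖ = 1 := by
  have hba : b - a ≠ 0 := sub_ne_zero.mpr (Ne.symm h)
  have : ‖b - a‖ ≠ 0 := norm_ne_zero_iff.mpr hba
  rw [unitDir, norm_smul, norm_inv, norm_norm, inv_mul_cancel₀ this]

lemma Dpair_nonneg (Q : Fin N → Pt) (i j0 j1 : Fin N) : 0 ≤ Dpair Q i j0 j1 := by
  apply Real.sInf_nonneg
  rintro r ⟨x, _, rfl⟩
  exact rot1norm_nonneg _ _

lemma Dedge_nonneg (Q : Fin N → Pt) (i : Fin N) (e : Finset (Fin N)) : 0 ≤ Dedge Q i e := by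
  apply Real.sInf_nonneg
  rintro r ⟨a, _, b, _, _, rfl⟩
  exact Dpair_nonneg Q i a b

end AuxGeo
/-- Lower bound on the distance from an interior vertex to a non-incident (arbitrary) 1-face. -/
theorem stmt12 {N : ℕ} (hN : 3 ≤ N) (Δ : OrientedComplex N)
    (Qref : Fin N → Pt) (href : Qref ∈ Mplus Δ)
    (β1 β2 β3 : ℝ) (hβ1 : 0 ≤ β1) (hβ2 : 0 ≤ β2) (hβ3 : 0 ≤ β3)
    (Q : Fin N → Pt) (hQ : Q ∈ Mplus Δ)
    (i0 j0 j1 : Fin N) (hv : ({i0} : Finset (Fin N)) ∈ Δ.faces)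
    (he : ({j0, j1} : Finset (Fin N)) ∈ Δ.faces) (hj01 : j0 ≠ j1)
    (hdisj : Q i0 ∉ segment ℝ (Q j0) (Q j1))
    (hiv : ∀ e ∈ Δ.faces, e.card = 2 → i0 ∈ e → IsInteriorEdge Δ e) :
    β1 / ffun Δ Qref β1 β2 β3 Q ≤ Dpair Q i0 j0 j1 := by
  classical
  obtain ⟨hadm, hpos⟩ := hQ
  obtain ⟨haff, -, hisect, -⟩ := hadm
  -- injectivity of Q on faces
  have hQinj : ∀ σ ∈ Δ.faces, ∀ y z : Fin N, y ∈ σ → z ∈ σ → Q y = Q z → y = z := by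
    intro σ hσ y z hy hz h
    have h5 := (haff σ hσ).injective (a₁ := ⟨y, hy⟩) (a₂ := ⟨z, hz⟩) h
    exact Subtype.ext_iff.mp h5
  have hQjj : Q j0 ≠ Q j1 := by
    intro h
    exact hj01 (hQinj _ he j0 j1 (by simp) (by simp) h)
  have hi0j0 : i0 ≠ j0 := by rintro rfl; exact hdisj (left_mem_segment ℝ _ _)
  have hi0j1 : i0 ≠ j1 := by rintro rfl; exact hdisj (right_mem_segment ℝ _ _)
  -- star of i0 is nonempty
  obtain ⟨σ0, hσ0f, hσ03, hσ0sub⟩ := Δ.pure {i0} hv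
  have hσ0i : i0 ∈ σ0 := hσ0sub (Finset.mem_singleton_self i0)
  -- the finite set of cone pairs around i0
  set T := (Δ.faces.filter (fun σ => σ.card = 3 ∧ i0 ∈ σ)).image (pairFor Δ Q i0) with hTdef
  have hTmem : ∀ p ∈ T, ∃ σ, (σ ∈ Δ.faces ∧ σ.card = 3 ∧ i0 ∈ σ) ∧ pairFor Δ Q i0 σ = p := by
    intro p hp
    rw [hTdef] at hp
    obtain ⟨σ, hσ, hσp⟩ := Finset.mem_image.mp hp
    obtain ⟨h1, h2, h3⟩ := Finset.mem_filter.mp hσ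
    exact ⟨σ, ⟨h1, h2, h3⟩, hσp⟩
  have hTof : ∀ σ, σ ∈ Δ.faces → σ.card = 3 → i0 ∈ σ → pairFor Δ Q i0 σ ∈ T := by
    intro σ h1 h2 h3
    rw [hTdef]
    exact Finset.mem_image_of_mem _ (Finset.mem_filter.mpr ⟨h1, h2, h3⟩)
  have hTne : T.Nonempty := ⟨_, hTof σ0 hσ0f hσ03 hσ0i⟩
  have hTpos : ∀ p ∈ T, 0 < det2 p.1 p.2 := by
    intro p hp
    obtain ⟨σ, ⟨h1, h2, h3⟩, rfl⟩ := hTmem p hp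
    rw [pairFor_det Δ Q i0 h1 h2 h3]
    linarith [hpos σ h1 h2]
  have hTsucc : ∀ p ∈ T, ∃ q ∈ T, q.1 = p.2 := by
    intro p hp
    obtain ⟨σ, ⟨h1, h2, h3⟩, rfl⟩ := hTmem p hp
    obtain ⟨τ, hτ1, hτ2, hτ3, hτ4⟩ := star_succ Δ Q i0 hiv h1 h2 h3
    exact ⟨pairFor Δ Q i0 τ, hTof τ hτ1 hτ2 hτ3, hτ4⟩
  have hTpred : ∀ p ∈ T, ∃ q ∈ T, q.2 = p.1 := by
    intro p hp
    obtain ⟨σ, ⟨h1, h2, h3⟩, rfl⟩ := hTmem p hp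
    obtain ⟨τ, hτ1, hτ2, hτ3, hτ4⟩ := star_pred Δ Q i0 hiv h1 h2 h3
    exact ⟨pairFor Δ Q i0 τ, hTof τ hτ1 hτ2 hτ3, hτ4⟩
  -- all heights are positive
  have hheight : ∀ σ ∈ Δ.faces, σ.card = 3 → ∀ m : Fin 3, 0 < height Q (Δ.orient σ) m := by
    intro σ h1 h2 m
    have hA := hpos σ h1 h2
    have hne13 : Δ.orient σ (m+1) ≠ Δ.orient σ (m+2) := by
      intro h
      exact ((by decide : ∀ k : Fin 3, k + 1 ≠ k + 2) m) (orient_injective Δ h1 h2 h)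
    have hQne : Q (Δ.orient σ (m+1)) ≠ Q (Δ.orient σ (m+2)) := by
      intro h
      exact hne13 (hQinj σ h1 _ _ (orient_mem Δ h1 h2 (m+1)) (orient_mem Δ h1 h2 (m+2)) h)
    have hE : 0 < edgeLen Q (Δ.orient σ) m := by
      rw [edgeLen, norm_pos_iff]
      exact sub_ne_zero.mpr hQne
    rw [height]
    exact div_pos (by linarith) hE
  -- the augmentation function dominates each single height term
  have hffun_ge : ∀ σ ∈ Δ.faces, σ.card = 3 → ∀ m : Fin 3,
      β1 / height Q (Δ.orient σ) m ≤ ffun Δ Qref β1 β2 β3 Q := by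
    intro σ h1 h2 m
    have ht1 : β1 / height Q (Δ.orient σ) m ≤ ∑ k : Fin 3, β1 / height Q (Δ.orient σ) k :=
      Finset.single_le_sum (fun k _ => div_nonneg hβ1 (hheight σ h1 h2 k).le) (Finset.mem_univ m)
    have hσtf : σ ∈ twoFaces Δ := Finset.mem_filter.mpr ⟨h1, h2⟩
    have ht2 : (∑ k : Fin 3, β1 / height Q (Δ.orient σ) k)
        ≤ ∑ σ' ∈ twoFaces Δ, ∑ k : Fin 3, β1 / height Q (Δ.orient σ') k := by
      apply Finset.single_le_sum (f := fun σ' => ∑ k : Fin 3, β1 / height Q (Δ.orient σ') k)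
        ?_ hσtf
      intro σ' hσ'
      obtain ⟨h1', h2'⟩ := Finset.mem_filter.mp hσ'
      exact Finset.sum_nonneg fun k _ => div_nonneg hβ1 (hheight σ' h1' h2' k).le
    have hsum2 : 0 ≤ ∑ e ∈ boundaryEdges Δ,
        ∑ i ∈ (boundaryVertices Δ).filter (fun i => i ∉ e), β2 / Dedge Q i e :=
      Finset.sum_nonneg fun e _ => Finset.sum_nonneg fun i _ =>
        div_nonneg hβ2 (Dedge_nonneg Q i e)
    have hsum3 : 0 ≤ β3 / 2 * frobSq Q Qref := by
      apply mul_nonneg (by linarith)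
      exact Finset.sum_nonneg fun i _ => by positivity
    rw [ffun]
    linarith
  -- the pointwise lower bound along the segment
  have key : ∀ x ∈ segment ℝ (Q j0) (Q j1),
      β1 / ffun Δ Qref β1 β2 β3 Q ≤ rot1norm (unitDir (Q j0) (Q j1)) (Q i0 - x) := by
    intro x hx
    rcases eq_or_lt_of_le hβ1 with hb0 | hb1
    · rw [← hb0, zero_div]; exact rot1norm_nonneg _ _
    obtain ⟨p, hpT, hc1, hc2⟩ := cone_cover T hTne hTpos hTsucc hTpred (x - Q i0)
    obtain ⟨σ, ⟨h1, h2, h3⟩, rfl⟩ := hTmem p hpT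
    set ℓ := idxAt Δ i0 σ with hℓ
    have hoi : Δ.orient σ ℓ = i0 := idxAt_eq Δ i0 h1 h2 h3
    set av := Δ.orient σ (ℓ+1) with hav
    set bv := Δ.orient σ (ℓ+2) with hbv
    have hpf : pairFor Δ Q i0 σ = (Q av - Q i0, Q bv - Q i0) := rfl
    have hc1' : 0 ≤ det2 (x - Q i0) (Q bv - Q i0) := by rw [hpf] at hc1; exact hc1
    have hc2' : 0 ≤ det2 (Q av - Q i0) (x - Q i0) := by rw [hpf] at hc2; exact hc2
    have hd2 : 2 * signedArea Q (Δ.orient σ) = det2 (Q av - Q i0) (Q bv - Q i0) := by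
      have hd := pairFor_det Δ Q i0 h1 h2 h3
      rw [hpf] at hd
      exact hd.symm
    have hD : 0 < det2 (Q av - Q i0) (Q bv - Q i0) := by
      rw [← hd2]; linarith [hpos σ h1 h2]
    -- vertex distinctness
    have hiav : i0 ≠ av := by
      rw [← hoi, hav]
      intro h
      exact ((by decide : ∀ k : Fin 3, k ≠ k + 1) ℓ) (orient_injective Δ h1 h2 h)
    have hibv : i0 ≠ bv := by
      rw [← hoi, hbv]
      intro h
      exact ((by decide : ∀ k : Fin 3, k ≠ k + 2) ℓ) (orient_injective Δ h1 h2 h)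
    have havbv' : av ≠ bv := by
      rw [hav, hbv]
      intro h
      exact ((by decide : ∀ k : Fin 3, k + 1 ≠ k + 2) ℓ) (orient_injective Δ h1 h2 h)
    have havσ : av ∈ σ := by rw [hav]; exact orient_mem Δ h1 h2 _
    have hbvσ : bv ∈ σ := by rw [hbv]; exact orient_mem Δ h1 h2 _
    have havbv : Q av ≠ Q bv := fun h => havbv' (hQinj σ h1 _ _ havσ hbvσ h)
    -- the height through i0
    have hhv : height Q (Δ.orient σ) ℓ
        = det2 (Q av - Q i0) (Q bv - Q i0) / ‖Q av - Q bv‖ := by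
      rw [height, edgeLen, hd2]
    -- σ as an explicit triple
    have hσeq : ({i0, av, bv} : Finset (Fin N)) = σ := by
      apply Finset.eq_of_subset_of_card_le
      · intro y hy
        rcases Finset.mem_insert.mp hy with rfl | hy2
        · exact h3
        rcases Finset.mem_insert.mp hy2 with rfl | hy3
        · exact havσ
        · rw [Finset.mem_singleton.mp hy3]; exact hbvσ
      · rw [h2]
        rw [Finset.card_insert_of_notMem (by simp [hiav, hibv]),
          Finset.card_insert_of_notMem (by simp [havbv']), Finset.card_singleton]
    -- distance lower bound
    have hdist : height Q (Δ.orient σ) ℓ ≤ ‖x - Q i0‖ := by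
      by_contra hlt
      push_neg at hlt
      have hnormpos : 0 < ‖Q av - Q bv‖ := norm_pos_iff.mpr (sub_ne_zero.mpr havbv)
      have hn : ‖x - Q i0‖ * ‖Q av - Q bv‖ < det2 (Q av - Q i0) (Q bv - Q i0) := by
        rw [hhv] at hlt
        exact (lt_div_iff₀ hnormpos).mp hlt
      have hxtri := mem_triangle_of_cone (Q i0) (Q av) (Q bv) x hD hc1' hc2' hn
      have hsub : ({Q i0, Q av, Q bv} : Set Pt) ⊆ Q '' (σ : Set (Fin N)) := by
        intro y hy
        rcases hy with rfl | hy2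
        · exact ⟨i0, Finset.mem_coe.mpr h3, rfl⟩
        rcases hy2 with rfl | hy3
        · exact ⟨av, Finset.mem_coe.mpr havσ, rfl⟩
        · rw [Set.mem_singleton_iff.mp hy3]; exact ⟨bv, Finset.mem_coe.mpr hbvσ, rfl⟩
      have hxσ : x ∈ convexHull ℝ (Q '' (σ : Set (Fin N))) := convexHull_mono hsub hxtri
      have hxe : x ∈ convexHull ℝ (Q '' (({j0, j1} : Finset (Fin N)) : Set (Fin N))) := by
        have himg : Q '' (({j0, j1} : Finset (Fin N)) : Set (Fin N)) = {Q j0, Q j1} := by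
          simp [Set.image_insert_eq]
        rw [himg, convexHull_pair]
        exact hx
      obtain ⟨ρ, hρne, hρσ, hρj, hρeq⟩ := hisect σ h1 {j0, j1} he ⟨x, hxσ, hxe⟩
      have hxρ : x ∈ convexHull ℝ (Q '' (ρ : Set (Fin N))) := by
        rw [← hρeq]; exact ⟨hxσ, hxe⟩
      have hρab : ∀ y ∈ ρ, y = av ∨ y = bv := by
        intro y hy
        have hyσ : y ∈ σ := hρσ hy
        have hyj : y ∈ ({j0, j1} : Finset (Fin N)) := hρj hy
        have hyne : y ≠ i0 := by
          rintro rfl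
          rcases Finset.mem_insert.mp hyj with h | h
          · exact hi0j0 h
          · exact hi0j1 (Finset.mem_singleton.mp h)
        rw [← hσeq] at hyσ
        rcases Finset.mem_insert.mp hyσ with h | h
        · exact absurd h hyne
        rcases Finset.mem_insert.mp h with h' | h'
        · exact Or.inl h'
        · exact Or.inr (Finset.mem_singleton.mp h')
      have hxab : x ∈ segment ℝ (Q av) (Q bv) := by
        have himg2 : Q '' (ρ : Set (Fin N)) ⊆ ({Q av, Q bv} : Set Pt) := by
          rintro y ⟨z, hz, rfl⟩
          rcases hρab z (Finset.mem_coe.mp hz) with rfl | rfl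
          · exact Set.mem_insert _ _
          · exact Set.mem_insert_iff.mpr (Or.inr rfl)
        have h6 := convexHull_mono himg2 hxρ
        rwa [convexHull_pair] at h6
      have h7 := seg_dist_ge (Q i0) (Q av) (Q bv) x hxab havbv
      rw [← hhv] at h7
      linarith
    -- combine the bounds
    have hfge := hffun_ge σ h1 h2 ℓ
    have hfpos : 0 < ffun Δ Qref β1 β2 β3 Q :=
      lt_of_lt_of_le (div_pos hb1 (hheight σ h1 h2 ℓ)) hfge
    have hb : β1 / ffun Δ Qref β1 β2 β3 Q ≤ height Q (Δ.orient σ) ℓ := by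
      rw [div_le_iff₀ hfpos]
      have hhp := hheight σ h1 h2 ℓ
      calc β1 = height Q (Δ.orient σ) ℓ * (β1 / height Q (Δ.orient σ) ℓ) := by
            field_simp
        _ ≤ height Q (Δ.orient σ) ℓ * ffun Δ Qref β1 β2 β3 Q :=
            mul_le_mul_of_nonneg_left hfge hhp.le
    calc β1 / ffun Δ Qref β1 β2 β3 Q ≤ height Q (Δ.orient σ) ℓ := hb
      _ ≤ ‖x - Q i0‖ := hdist
      _ = ‖Q i0 - x‖ := norm_sub_rev _ _
      _ ≤ rot1norm (unitDir (Q j0) (Q j1)) (Q i0 - x) :=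
          rot1norm_ge _ _ (norm_unitDir _ _ hQjj)
  -- conclude via the infimum
  rw [Dpair]
  apply le_csInf
  · exact ⟨_, ⟨Q j0, left_mem_segment ℝ _ _, rfl⟩⟩
  · rintro r ⟨x, hx, rfl⟩
    exact key x hx

end PlanarMesh
end
end
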